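/- arXiv:math/9407205 — 10 statements merged into one kernel-verified Lean document; each statement's English description precedes it below -/
import Mathlib

section
/- Let k : ℕ → ℕ be a sequence of positive natural numbers and let ⟨B_n ; n ∈ ℕ⟩ be a sequence of sets with B_n ⊆ (2^ω)^{k(n)} such that each B_n is meager in the product topology. Then there exists a nonempty perfect set P ⊆ 2^ω such that for every n and every tuple (x_0, …, x_{k(n)−1}) ∈ P^{k(n)} with pairwise distinct entries, the tuple (x_0, …, x_{k(n)−1}) does not belong to B_n. -/
/-!
Each `B n` misses a countable intersection `⋂ j, D n j` of dense open sets. Attach finite binary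
words to the nodes `t ∈ 2^s` of the binary tree. At stage `s` all `2^s` words are extended at once
so that for `n, j ≤ s` every `k n`-tuple of distinct nodes spans a box of cylinders inside
`D n j`: these finitely many requirements pull back, along the open maps `y ↦ y ∘ ι`, to a single
dense open subset of `(2^ω)^(2^s)`, and a dense open set contains a box of cylinders inside any
given box. Then every word is split by one more bit. The limit map of the scheme is a continuous
injection of `2^ω`, so its range `P` is perfect, and `k n` distinct points of `P` come from
branches that have separated by some level `s ≥ n, j`, hence lie in every `D n j`.
-/

open Set Function Filter Topology

lemma IsMeagre.exists_dense_open_seq {X : Type*} [TopologicalSpace X] {s : Set X}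
    (hs : IsMeagre s) :
    ∃ U : ℕ → Set X, (∀ j, IsOpen (U j)) ∧ (∀ j, Dense (U j)) ∧ ⋂ j, U j ⊆ sᶜ := by
  obtain ⟨S, hSo, hSd, hSc, hSs⟩ := mem_residual_iff.1 hs
  obtain ⟨U, hU⟩ := (hSc.insert univ).exists_eq_range (insert_nonempty _ _)
  have hmem : ∀ j, U j ∈ insert univ S := fun j => hU ▸ mem_range_self j
  refine ⟨U, fun j => ?_, fun j => ?_, ?_⟩
  · rcases hmem j with h | h
    · exact h ▸ isOpen_univ
    · exact hSo _ h
  · rcases hmem j with h | h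
    · exact h ▸ dense_univ
    · exact hSd _ h
  · rw [← sInter_range, ← hU, sInter_insert, univ_inter]
    exact hSs

namespace PiNat

variable {E : ℕ → Type*} [∀ n, TopologicalSpace (E n)] [∀ n, DiscreteTopology (E n)]

lemma eventually_cylinder_subset {x : ∀ n, E n} {s : Set (∀ n, E n)} (hs : s ∈ 𝓝 x) :
    ∀ᶠ n in atTop, cylinder x n ⊆ s := by
  obtain ⟨_, ⟨y, n, rfl⟩, hx, hsub⟩ := (isTopologicalBasis_cylinders E).mem_nhds_iff.1 hs
  rw [← mem_cylinder_iff_eq.1 hx] at hsub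
  filter_upwards [eventually_ge_atTop n] with m hm
  exact (cylinder_anti x hm).trans hsub

instance perfectSpace [∀ n, Nontrivial (E n)] : PerfectSpace (∀ n, E n) where
  univ_preperfect x _ := by
    rw [accPt_iff_nhds]
    intro U hU
    obtain ⟨n, hn⟩ := (eventually_cylinder_subset hU).exists
    obtain ⟨a, ha⟩ := exists_ne (x n)
    refine ⟨update x n a, ⟨hn (update_mem_cylinder x n a), mem_univ _⟩, fun h => ha ?_⟩
    simpa using congrFun h n

end PiNat

lemma perfect_range_of_continuous_of_injective {X Y : Type*} [TopologicalSpace X]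
    [TopologicalSpace Y] [CompactSpace X] [PerfectSpace X] [T2Space Y] {f : X → Y}
    (hf : Continuous f) (hinj : Injective f) : Perfect (range f) := by
  refine ⟨(isCompact_range hf).isClosed, ?_⟩
  rintro _ ⟨x, rfl⟩
  simpa using (PerfectSpace.univ_preperfect x (mem_univ x)).map hf.continuousAt hinj

lemma Function.Injective.isOpenMap_comp {ι κ X : Type*} [TopologicalSpace X] {e : ι → κ}
    (he : Injective e) : IsOpenMap fun y : κ → X => y ∘ e := by
  refine IsOpenMap.of_sections fun y =>
    ⟨fun x => extend e x y, ?_, ?_, fun x => Function.extend_comp he _ _⟩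
  · refine continuous_pi (fun t => ?_) |>.continuousAt
    by_cases ht : ∃ i, e i = t
    · obtain ⟨i, rfl⟩ := ht
      simpa only [he.extend_apply] using continuous_apply i
    · simpa only [extend_apply' _ _ _ ht] using continuous_const
  · funext t
    by_cases ht : ∃ i, e i = t
    · obtain ⟨i, rfl⟩ := ht
      exact he.extend_apply _ _ _
    · exact extend_apply' _ _ _ ht

def initSeg {α : Type*} (z : ℕ → α) (s : ℕ) : Fin s → α := fun i => z i

@[simp]
lemma init_initSeg {α : Type*} (z : ℕ → α) (s : ℕ) : Fin.init (initSeg z (s + 1)) = initSeg z s :=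
  rfl

@[simp]
lemma initSeg_last {α : Type*} (z : ℕ → α) (s : ℕ) : initSeg z (s + 1) (Fin.last s) = z s := rfl

lemma eventually_injective_initSeg {ι α : Type*} [Finite ι] {z : ι → ℕ → α} (hz : Injective z) :
    ∀ᶠ s in atTop, Injective fun i => initSeg (z i) s := by
  have h : ∀ i i', ∀ᶠ s in atTop, initSeg (z i) s = initSeg (z i') s → i = i' := by
    intro i i'
    by_cases hii : i = i'
    · exact .of_forall fun _ _ => hii
    obtain ⟨m, hm⟩ := Function.ne_iff.1 (hz.ne hii)
    filter_upwards [eventually_gt_atTop m] with s hs heq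
    exact absurd (congrFun heq ⟨m, hs⟩) hm
  filter_upwards [eventually_all.2 fun i => eventually_all.2 (h i)] with s hs i i' using hs i i'

namespace Mycielski

def cyl (t : List Bool) : Set (ℕ → Bool) := {x | ∀ m (h : m < t.length), x m = t[m]}

lemma cyl_nonempty (t : List Bool) : (cyl t).Nonempty :=
  ⟨fun m => t.getD m false, fun m h => by simp [h]⟩

lemma cyl_anti {t t' : List Bool} (h : t <+: t') : cyl t' ⊆ cyl t := fun x hx m hm => by
  rw [hx m (hm.trans_le h.length_le), h.getElem hm]

lemma isOpen_cyl (t : List Bool) : IsOpen (cyl t) := by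
  have : cyl t = PiNat.cylinder (fun m => t.getD m false) t.length := by
    ext x
    simp only [cyl, PiNat.mem_cylinder_iff, mem_ofPred_eq]
    exact forall_congr' fun m => ⟨fun h hm => by simp [h hm, hm], fun h hm => by simp [h hm, hm]⟩
  exact this ▸ PiNat.isOpen_cylinder _ _ _

lemma cyl_ofFn (x : ℕ → Bool) (n : ℕ) :
    cyl (List.ofFn fun m : Fin n => x m) = PiNat.cylinder x n := by
  ext y
  simp [cyl, PiNat.mem_cylinder_iff]

lemma prefix_ofFn_of_mem_cyl {x : ℕ → Bool} {t : List Bool} (hx : x ∈ cyl t) {n : ℕ}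
    (hn : t.length ≤ n) : t <+: List.ofFn fun m : Fin n => x m := by
  rw [List.prefix_iff_eq_take]
  refine List.ext_getElem (by simp [hn]) fun m hm _ => ?_
  simp [hx m hm]

lemma disjoint_cyl_append_singleton (l : List Bool) {a b : Bool} (hab : a ≠ b) :
    Disjoint (cyl (l ++ [a])) (cyl (l ++ [b])) := by
  refine disjoint_left.2 fun x ha hb => hab ?_
  have := (ha l.length (by simp)).symm.trans (hb l.length (by simp))
  simpa using this

lemma exists_prefix_pi_cyl_subset {ι : Type*} [Finite ι] {U : Set (ι → ℕ → Bool)}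
    (hUo : IsOpen U) (hUd : Dense U) (u : ι → List Bool) :
    ∃ v : ι → List Bool, (∀ i, u i <+: v i) ∧ univ.pi (fun i => cyl (v i)) ⊆ U := by
  have hbox : (univ.pi fun i => cyl (u i)).Nonempty :=
    univ_pi_nonempty_iff.2 fun i => cyl_nonempty (u i)
  obtain ⟨x, hxbox, hxU⟩ :=
    hUd.inter_open_nonempty _ (isOpen_set_pi finite_univ fun i _ => isOpen_cyl (u i)) hbox
  have hU := hUo.mem_nhds hxU
  rw [nhds_pi, Filter.mem_pi] at hU
  obtain ⟨I, -, t, ht, hIt⟩ := hU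
  obtain ⟨N, hN⟩ := (eventually_all.2 fun i => (PiNat.eventually_cylinder_subset (ht i)).and
    (eventually_ge_atTop (u i).length)).exists
  refine ⟨fun i => List.ofFn fun m : Fin N => x i m,
    fun i => prefix_ofFn_of_mem_cyl (hxbox i (mem_univ i)) (hN i).2, fun y hy => hIt fun i _ => ?_⟩
  exact (hN i).1 (by simpa only [cyl_ofFn] using hy i (mem_univ i))

section Scheme

variable (k : ℕ → ℕ) (D : (n : ℕ) → ℕ → Set (Fin (k n) → ℕ → Bool))

def stageSet (s : ℕ) : Set ((Fin s → Bool) → ℕ → Bool) :=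
  ⋂ (n : Fin (s + 1)) (j : Fin (s + 1)) (ι : {ι : Fin (k n) → Fin s → Bool // Injective ι}),
    (· ∘ ι.1) ⁻¹' D n j

variable {k D}

lemma isOpen_stageSet (hDo : ∀ n j, IsOpen (D n j)) (s : ℕ) : IsOpen (stageSet k D s) :=
  isOpen_iInter_of_finite fun _ => isOpen_iInter_of_finite fun _ => isOpen_iInter_of_finite
    fun ι => (hDo _ _).preimage (continuous_pi fun i => continuous_apply (ι.1 i))

lemma dense_stageSet (hDo : ∀ n j, IsOpen (D n j)) (hDd : ∀ n j, Dense (D n j)) (s : ℕ) :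
    Dense (stageSet k D s) := by
  have ho : ∀ (n j : Fin (s + 1)) (ι : {ι : Fin (k n) → Fin s → Bool // Injective ι}),
      IsOpen ((· ∘ ι.1) ⁻¹' D n j) := fun n j ι =>
    (hDo _ _).preimage (continuous_pi fun i => continuous_apply (ι.1 i))
  exact dense_iInter_of_isOpen (fun n => isOpen_iInter_of_finite fun j => isOpen_iInter_of_finite
    (ho n j)) fun n => dense_iInter_of_isOpen (fun j => isOpen_iInter_of_finite (ho n j))
    fun j => dense_iInter_of_isOpen (ho n j) fun ι => (hDd n j).preimage ι.2.isOpenMap_comp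

variable (hDo : ∀ n j, IsOpen (D n j)) (hDd : ∀ n j, Dense (D n j))

/- `word s t` is the word attached to the node `t` of level `s`; `wordExt s` extends the words of
level `s` into a box of cylinders inside `stageSet k D s`, and level `s + 1` appends one bit. -/
noncomputable def word : (s : ℕ) → (Fin s → Bool) → List Bool
  | 0 => fun _ => []
  | s + 1 => fun t =>
    (exists_prefix_pi_cyl_subset (isOpen_stageSet hDo s) (dense_stageSet hDo hDd s)
      (word s)).choose (Fin.init t) ++ [t (Fin.last s)]

noncomputable def wordExt (s : ℕ) : (Fin s → Bool) → List Bool :=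
  (exists_prefix_pi_cyl_subset (isOpen_stageSet hDo s) (dense_stageSet hDo hDd s)
    (word hDo hDd s)).choose

lemma word_succ (s : ℕ) (t : Fin (s + 1) → Bool) :
    word hDo hDd (s + 1) t = wordExt hDo hDd s (Fin.init t) ++ [t (Fin.last s)] := rfl

lemma word_prefix_wordExt (s : ℕ) (t : Fin s → Bool) : word hDo hDd s t <+: wordExt hDo hDd s t :=
  (exists_prefix_pi_cyl_subset (isOpen_stageSet hDo s) (dense_stageSet hDo hDd s)
    (word hDo hDd s)).choose_spec.1 t

lemma pi_cyl_wordExt_subset_stageSet (s : ℕ) :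
    univ.pi (fun t => cyl (wordExt hDo hDd s t)) ⊆ stageSet k D s :=
  (exists_prefix_pi_cyl_subset (isOpen_stageSet hDo s) (dense_stageSet hDo hDd s)
    (word hDo hDd s)).choose_spec.2

lemma le_length_word (s : ℕ) (t : Fin s → Bool) : s ≤ (word hDo hDd s t).length := by
  induction s with
  | zero => exact Nat.zero_le _
  | succ s ih =>
    rw [word_succ, List.length_append, List.length_singleton]
    exact Nat.succ_le_succ ((ih _).trans (word_prefix_wordExt hDo hDd s _).length_le)

lemma word_initSeg_prefix (z : ℕ → Bool) {s s' : ℕ} (h : s ≤ s') :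
    word hDo hDd s (initSeg z s) <+: word hDo hDd s' (initSeg z s') := by
  induction s', h using Nat.le_induction with
  | base => exact List.prefix_refl _
  | succ s' _ ih =>
    rw [word_succ]
    exact ih.trans ((word_prefix_wordExt hDo hDd s' _).trans (List.prefix_append _ _))

noncomputable def limitMap (z : ℕ → Bool) : ℕ → Bool :=
  fun m => (word hDo hDd (m + 1) (initSeg z (m + 1))).getD m false

lemma limitMap_mem_cyl_word (z : ℕ → Bool) (s : ℕ) :
    limitMap hDo hDd z ∈ cyl (word hDo hDd s (initSeg z s)) := by
  intro m hm
  have hm' : m < (word hDo hDd (m + 1) (initSeg z (m + 1))).length :=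
    Nat.lt_of_succ_le (le_length_word hDo hDd _ _)
  have h₁ := word_initSeg_prefix hDo hDd z (le_max_left s (m + 1))
  have h₂ := word_initSeg_prefix hDo hDd z (le_max_right s (m + 1))
  rw [limitMap, List.getD_eq_getElem _ _ hm', h₂.getElem hm', ← h₁.getElem hm]

lemma limitMap_mem_cyl_wordExt (z : ℕ → Bool) (s : ℕ) :
    limitMap hDo hDd z ∈ cyl (wordExt hDo hDd s (initSeg z s)) :=
  cyl_anti (List.prefix_append _ _) (limitMap_mem_cyl_word hDo hDd z (s + 1))

lemma continuous_limitMap : Continuous (limitMap hDo hDd) :=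
  continuous_pi fun m =>
    (continuous_of_discreteTopology (f := fun t => (word hDo hDd (m + 1) t).getD m false)).comp
      (continuous_pi fun i => continuous_apply (i : ℕ) : Continuous fun z => initSeg z (m + 1))

lemma injective_limitMap : Injective (limitMap hDo hDd) := by
  intro z z' h
  by_contra hne
  set m := PiNat.firstDiff z z'
  have hinit : initSeg z m = initSeg z' m :=
    funext fun i => PiNat.apply_eq_of_lt_firstDiff i.2
  have hz := limitMap_mem_cyl_word hDo hDd z (m + 1)
  have hz' := limitMap_mem_cyl_word hDo hDd z' (m + 1)
  rw [word_succ, init_initSeg, initSeg_last] at hz hz'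
  rw [hinit] at hz
  exact (disjoint_cyl_append_singleton _ (PiNat.apply_firstDiff_ne hne)).ne_of_mem hz hz' h

lemma mem_of_forall_mem_cyl_wordExt {s n j : ℕ} (hn : n ≤ s) (hj : j ≤ s)
    {ι : Fin (k n) → Fin s → Bool} (hι : Injective ι) {x : Fin (k n) → ℕ → Bool}
    (hx : ∀ i, x i ∈ cyl (wordExt hDo hDd s (ι i))) : x ∈ D n j := by
  choose c hc using fun t => cyl_nonempty (wordExt hDo hDd s t)
  have hy : extend ι x c ∈ stageSet k D s := pi_cyl_wordExt_subset_stageSet hDo hDd s fun t _ => by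
    by_cases ht : ∃ i, ι i = t
    · obtain ⟨i, rfl⟩ := ht
      rw [hι.extend_apply]
      exact hx i
    · rw [extend_apply' _ _ _ ht]
      exact hc t
  simp only [stageSet, mem_iInter] at hy
  simpa only [mem_preimage, extend_comp hι] using
    hy ⟨n, Nat.lt_succ_of_le hn⟩ ⟨j, Nat.lt_succ_of_le hj⟩ ⟨ι, hι⟩

end Scheme

end Mycielski

theorem mycielski_meager_general
    (k : ℕ → ℕ)
    (B : (n : ℕ) → Set (Fin (k n) → (ℕ → Bool)))
    (hB : ∀ n, IsMeagre (B n)) :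
    ∃ P : Set (ℕ → Bool), P.Nonempty ∧ Perfect P ∧
      ∀ n, ∀ x : Fin (k n) → (ℕ → Bool),
        (∀ i, x i ∈ P) → Function.Injective x → x ∉ B n := by
  choose D hDo hDd hDB using fun n => (hB n).exists_dense_open_seq
  set f := Mycielski.limitMap hDo hDd
  refine ⟨range f, range_nonempty f, perfect_range_of_continuous_of_injective
    (Mycielski.continuous_limitMap hDo hDd) (Mycielski.injective_limitMap hDo hDd), ?_⟩
  intro n x hxP hx
  choose z hz using hxP
  obtain rfl : f ∘ z = x := funext hz
  refine hDB n (mem_iInter.2 fun j => ?_)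
  obtain ⟨s, hns, hjs, hzs⟩ := ((eventually_ge_atTop n).and ((eventually_ge_atTop j).and
    (eventually_injective_initSeg hx.of_comp))).exists
  exact Mycielski.mem_of_forall_mem_cyl_wordExt hDo hDd hns hjs hzs
    fun i => Mycielski.limitMap_mem_cyl_wordExt hDo hDd (z i) s

/-- Mycielski's theorem for meager sets: given a sequence of meager sets
`B n ⊆ (2^ω)^(k n)`, there is a nonempty perfect set `P ⊆ 2^ω` such that no tuple of
pairwise distinct elements of `P` lies in any `B n`. -/
theorem mycielski_meager
    (k : ℕ → ℕ) (hk : ∀ n, 0 < k n)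
    (B : (n : ℕ) → Set (Fin (k n) → (ℕ → Bool)))
    (hB : ∀ n, IsMeagre (B n)) :
    ∃ P : Set (ℕ → Bool), P.Nonempty ∧ Perfect P ∧
      ∀ n, ∀ x : Fin (k n) → (ℕ → Bool),
        (∀ i, x i ∈ P) → Function.Injective x → x ∉ B n :=
  mycielski_meager_general k B hB
end

section
/- For every m ≥ 1 and every Borel measurable function f : (2^ω)^m → 2^ω there exists a nonempty perfect set P ⊆ 2^ω that is free for f. -/
/-!
Fix a coordinate `j` of a tuple `w : Fin k → 2^ω` and a map `π : Fin m → Fin k` avoiding `j`.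
A Borel function is continuous on a comeagre set, and 2^ω has no isolated points, so the graph of
`u ↦ f (u ∘ π)` is meagre; hence the tuples `w` with `f (w ∘ π) = w j` form a meagre set. By
Mycielski's theorem, proved by a fusion of cylinders, there is a perfect set `P` all of whose
injective tuples, of every length, avoid these meagre sets. If `a` takes values in `P` and `f a`
is a new point of `P`, listing the distinct values of `a` together with `f a` yields such an
injective tuple on which freeness fails.
-/

open Set Filter Topology Function TopologicalSpace

instance Pi.perfectSpace {ι : Type*} [Infinite ι] {α : ι → Type*} [∀ i, TopologicalSpace (α i)]
    [∀ i, Nontrivial (α i)] : PerfectSpace (∀ i, α i) := by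
  classical
  refine ⟨preperfect_iff_nhds.2 fun x _ U hU => ?_⟩
  obtain ⟨I, t, ht, hIt⟩ := Filter.mem_pi'.1 (nhds_pi (a := x) ▸ hU)
  obtain ⟨n, hn⟩ := I.exists_notMem
  obtain ⟨c, hc⟩ := exists_ne (x n)
  refine ⟨update x n c, ⟨hIt fun i hi => ?_, mem_univ _⟩, fun h => hc (by simpa using congrFun h n)⟩
  rw [update_of_ne (ne_of_mem_of_not_mem hi hn)]
  exact mem_of_mem_nhds (ht i)

theorem preperfect_range_of_continuous_injective {α β : Type*} [TopologicalSpace α]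
    [TopologicalSpace β] [PerfectSpace α] {f : α → β} (hf : Continuous f) (hinj : Injective f) :
    Preperfect (range f) := by
  rintro _ ⟨x, rfl⟩
  refine accPt_iff_nhds.2 fun U hU => ?_
  obtain ⟨x', hx'U, hx'⟩ :=
    ((eventually_nhdsWithin_of_eventually_nhds (hf.continuousAt hU)).and
      (self_mem_nhdsWithin (s := {x}ᶜ))).exists
  exact ⟨f x', ⟨hx'U, x', rfl⟩, hinj.ne hx'⟩

theorem exists_dense_open_iInter_subset {X : Type*} [TopologicalSpace X] [BaireSpace X]
    {s : Set X} (hs : s ∈ residual X) :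
    ∃ D : ℕ → Set X, (∀ j, IsOpen (D j)) ∧ (∀ j, Dense (D j)) ∧ ⋂ j, D j ⊆ s := by
  obtain ⟨t, hts, htG, htd⟩ := mem_residual.1 hs
  obtain ⟨D, hDo, rfl⟩ := htG.eq_iInter_nat
  exact ⟨D, hDo, fun j => htd.mono (iInter_subset _ j), hts⟩

section Graph

variable {Y X : Type*} [TopologicalSpace Y] [TopologicalSpace X] {g : Y → X} {C : Set Y}

theorem Measurable.exists_mem_residual_continuousOn [MeasurableSpace Y] [BorelSpace Y]
    [SecondCountableTopology X] [MeasurableSpace X] [OpensMeasurableSpace X]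
    (hg : Measurable g) : ∃ C ∈ residual Y, ContinuousOn g C := by
  have hB := isBasis_countableBasis X
  have : ∀ b : countableBasis X, ∃ U, IsOpen U ∧ g ⁻¹' b =ᵇ U := fun b =>
    (hg (hB.isOpen b.2).measurableSet).residualEq_isOpen
  choose U hUo hU using this
  have := (countable_countableBasis X).to_subtype
  refine ⟨{y | ∀ b : countableBasis X, y ∈ g ⁻¹' b ↔ y ∈ U b}, eventually_countable_forall.2
    fun b => eventuallyEq_set.1 (hU b), hB.continuousOn_iff.2 fun b hb => ⟨U ⟨b, hb⟩, hUo _, ?_⟩⟩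
  ext y
  exact and_congr_left fun hy => hy ⟨b, hb⟩

theorem ContinuousOn.eq_of_mem_closure_graph [T2Space X] (hg : ContinuousOn g C) {y : Y} {x : X}
    (hy : y ∈ C) (hx : (y, x) ∈ closure (g.graph ∩ Prod.fst ⁻¹' C)) : g y = x := by
  by_contra hne
  obtain ⟨u, v, hu, hv, hyu, hxv, huv⟩ := t2_separation hne
  obtain ⟨U, hU, hyU, hUC⟩ := mem_nhdsWithin.1 (hg y hy (hu.mem_nhds hyu))
  obtain ⟨⟨y', x'⟩, ⟨hy'U, hx'v⟩, rfl : g y' = x', hy'C⟩ :=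
    mem_closure_iff.1 hx _ (hU.prod hv) ⟨hyU, hxv⟩
  exact huv.ne_of_mem (hUC ⟨hy'U, hy'C⟩) hx'v rfl

theorem ContinuousOn.isNowhereDense_graph_inter [T2Space X] [PerfectSpace X]
    (hg : ContinuousOn g C) : IsNowhereDense (g.graph ∩ Prod.fst ⁻¹' C) := by
  rw [isNowhereDense_iff_forall_notMem_nhds]
  rintro ⟨y, _⟩ ⟨rfl : g y = _, hy : y ∈ C⟩ hcl
  -- The vertical slice of the closure through `y` would be a neighbourhood of the
  -- non-isolated point `g y`, but it is `{g y}`.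
  have hslice : ∀ᶠ x in 𝓝 (g y), (y, x) ∈ closure (g.graph ∩ Prod.fst ⁻¹' C) :=
    (Continuous.prodMk_right y).continuousAt.preimage_mem_nhds hcl
  obtain ⟨x, hx, hne⟩ := ((eventually_nhdsWithin_of_eventually_nhds hslice).and
    (self_mem_nhdsWithin (s := {g y}ᶜ))).exists
  exact hne (hg.eq_of_mem_closure_graph hy hx).symm

theorem Measurable.isMeagre_graph [MeasurableSpace Y] [BorelSpace Y] [SecondCountableTopology X]
    [MeasurableSpace X] [OpensMeasurableSpace X] [T2Space X] [PerfectSpace X]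
    (hg : Measurable g) : IsMeagre g.graph := by
  obtain ⟨C, hC, hgC⟩ := hg.exists_mem_residual_continuousOn
  have hCc : IsMeagre (Prod.fst ⁻¹' Cᶜ : Set (Y × X)) :=
    IsMeagre.preimage_of_isOpenMap continuous_fst isOpenMap_fst (by rwa [IsMeagre, compl_compl])
  refine (hgC.isNowhereDense_graph_inter.isMeagre.union hCc).mono fun p hp => ?_
  by_cases h : p.1 ∈ C
  exacts [Or.inl ⟨hp, h⟩, Or.inr h]

end Graph

namespace Cantor

def cyl (u : List Bool) : Set (ℕ → Bool) := {x | ∀ i (h : i < u.length), x i = u[i]}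

def initSeg (x : ℕ → Bool) (n : ℕ) : List Bool := List.ofFn fun i : Fin n => x i

def box {k : ℕ} (B : Fin k → List Bool) : Set (Fin k → ℕ → Bool) := univ.pi fun i => cyl (B i)

theorem isOpen_cyl (u : List Bool) : IsOpen (cyl u) := by
  have : cyl u = ⋂ i : Fin u.length, (fun x : ℕ → Bool => x i) ⁻¹' {u[i]} := by
    ext x
    simp [cyl, Fin.forall_iff]
  rw [this]
  exact isOpen_iInter_of_finite fun i => (isOpen_discrete _).preimage (continuous_apply _)

theorem cyl_nonempty (u : List Bool) : (cyl u).Nonempty :=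
  ⟨fun i => u.getD i false, fun i hi => by simp [hi]⟩

theorem cyl_anti {u v : List Bool} (h : u <+: v) : cyl v ⊆ cyl u := fun x hx i hi => by
  rw [hx i (hi.trans_le h.length_le), h.getElem hi]

theorem apply_length_of_mem_cyl {u : List Bool} {b : Bool} {x : ℕ → Bool}
    (hx : x ∈ cyl (u ++ [b])) : x u.length = b := by
  simpa using hx u.length (by simp)

theorem prefix_initSeg {u : List Bool} {x : ℕ → Bool} (hx : x ∈ cyl u) {n : ℕ}
    (hn : u.length ≤ n) : u <+: initSeg x n := by
  rw [List.prefix_iff_eq_take]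
  refine List.ext_getElem (by simp [initSeg, hn]) fun i h₁ h₂ => ?_
  simp [initSeg, hx i h₁]

theorem eventually_cyl_initSeg_subset {x : ℕ → Bool} {s : Set (ℕ → Bool)} (hs : s ∈ 𝓝 x) :
    ∀ᶠ n in atTop, cyl (initSeg x n) ⊆ s := by
  obtain ⟨I, t, ht, hIt⟩ := Filter.mem_pi'.1 (nhds_pi (a := x) ▸ hs)
  filter_upwards [I.eventually_all.2 fun i _ => eventually_gt_atTop i] with n hn y hy
  refine hIt fun i hi => ?_
  have : y i = x i := by simpa [initSeg] using hy i (by simpa [initSeg] using hn i hi)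
  exact this ▸ mem_of_mem_nhds (ht i)

variable {k : ℕ}

theorem isOpen_box (B : Fin k → List Bool) : IsOpen (box B) :=
  isOpen_set_pi finite_univ fun i _ => isOpen_cyl (B i)

theorem box_anti {B B' : Fin k → List Bool} (h : ∀ i, B i <+: B' i) : box B' ⊆ box B :=
  pi_mono fun i _ => cyl_anti (h i)

theorem eventually_box_initSeg_subset {z : Fin k → ℕ → Bool} {S : Set (Fin k → ℕ → Bool)}
    (hS : S ∈ 𝓝 z) : ∀ᶠ n in atTop, box (fun i => initSeg (z i) n) ⊆ S := by
  obtain ⟨I, t, ht, hIt⟩ := Filter.mem_pi'.1 (nhds_pi (a := z) ▸ hS)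
  filter_upwards [eventually_all.2 fun i => eventually_cyl_initSeg_subset (ht i)] with n hn
  exact (pi_mono' (fun i _ => hn i) (subset_univ _)).trans hIt

theorem exists_prefix_box_subset {D : Set (Fin k → ℕ → Bool)} (hDo : IsOpen D) (hDd : Dense D)
    (B : Fin k → List Bool) : ∃ B' : Fin k → List Bool, (∀ i, B i <+: B' i) ∧ box B' ⊆ D := by
  obtain ⟨z, hzB, hzD⟩ :=
    hDd.inter_open_nonempty _ (isOpen_box B) (univ_pi_nonempty_iff.2 fun i => cyl_nonempty _)
  obtain ⟨n, hn, hlen⟩ := ((eventually_box_initSeg_subset ((hDo.inter (isOpen_box B)).mem_nhds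
    ⟨hzD, hzB⟩)).and (eventually_all.2 fun i => eventually_ge_atTop (B i).length)).exists
  exact ⟨fun i => initSeg (z i) n, fun i => prefix_initSeg (hzB i trivial) (hlen i),
    hn.trans inter_subset_left⟩

theorem exists_prefix_forall_of_finite {I ι : Type*} [Finite ι] (Q : ι → (I → List Bool) → Prop)
    (mono : ∀ r (A A' : I → List Bool), (∀ v, A v <+: A' v) → Q r A → Q r A')
    (exists_prefix : ∀ r (A : I → List Bool), ∃ A', (∀ v, A v <+: A' v) ∧ Q r A')
    (A : I → List Bool) : ∃ A', (∀ v, A v <+: A' v) ∧ ∀ r, Q r A' := by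
  classical
  have := Fintype.ofFinite ι
  suffices ∀ s : Finset ι, ∃ A', (∀ v, A v <+: A' v) ∧ ∀ r ∈ s, Q r A' by
    simpa using this Finset.univ
  intro s
  induction s using Finset.induction_on with
  | empty => exact ⟨A, fun v => List.prefix_refl _, by simp⟩
  | insert r s _ ih =>
    obtain ⟨A₁, hA₁, hQ₁⟩ := ih
    obtain ⟨A₂, hA₂, hQ₂⟩ := exists_prefix r A₁
    refine ⟨A₂, fun v => (hA₁ v).trans (hA₂ v), fun r' hr' => ?_⟩
    rcases Finset.mem_insert.1 hr' with rfl | hr'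
    exacts [hQ₂, mono r' A₁ A₂ hA₂ (hQ₁ r' hr')]

theorem exists_prefix_box_comp_subset {I : Type*} {s : Fin k → I} (hs : Injective s)
    {D : Set (Fin k → ℕ → Bool)} (hDo : IsOpen D) (hDd : Dense D) (A : I → List Bool) :
    ∃ A' : I → List Bool, (∀ v, A v <+: A' v) ∧ box (A' ∘ s) ⊆ D := by
  obtain ⟨B, hAB, hBD⟩ := exists_prefix_box_subset hDo hDd (A ∘ s)
  refine ⟨extend s B A, fun v => ?_, ?_⟩
  · by_cases hv : ∃ i, s i = v
    · obtain ⟨i, rfl⟩ := hv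
      rw [hs.extend_apply]
      exact hAB i
    · rw [extend_apply' _ _ _ hv]
  · rwa [show extend s B A ∘ s = B from funext fun i => hs.extend_apply B A i]

def IsFusionLevel (D : ∀ k, ℕ → Set (Fin k → ℕ → Bool)) (N : ℕ)
    (A : (Fin N → Bool) → List Bool) : Prop :=
  ∀ k ≤ N, ∀ j ≤ N, ∀ s : Fin k → Fin N → Bool, Injective s → box (A ∘ s) ⊆ D k j

theorem exists_prefix_isFusionLevel {D : ∀ k, ℕ → Set (Fin k → ℕ → Bool)}
    (hDo : ∀ k j, IsOpen (D k j)) (hDd : ∀ k j, Dense (D k j))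
    (N : ℕ) (A : (Fin N → Bool) → List Bool) :
    ∃ A', (∀ v, A v <+: A' v) ∧ IsFusionLevel D N A' := by
  obtain ⟨A', hAA', hA'⟩ := exists_prefix_forall_of_finite
    (ι := Σ k : Fin (N + 1), Fin (N + 1) × (Fin k → Fin N → Bool))
    (fun r A => Injective r.2.2 → box (A ∘ r.2.2) ⊆ D r.1 r.2.1)
    (fun _ A A' hAA' hA hs => (box_anti fun i => hAA' _).trans (hA hs))
    (fun ⟨k, j, s⟩ A => by
      by_cases hs : Injective s
      · obtain ⟨A', hAA', hA'⟩ := exists_prefix_box_comp_subset hs (hDo k j) (hDd k j) A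
        exact ⟨A', hAA', fun _ => hA'⟩
      · exact ⟨A, fun v => List.prefix_refl _, fun h => absurd h hs⟩) A
  exact ⟨A', hAA', fun k hk j hj s hs =>
    hA' ⟨⟨k, Nat.lt_succ_of_le hk⟩, ⟨j, Nat.lt_succ_of_le hj⟩, s⟩ hs⟩

/-- The cylinder of `node N v` is meant to contain the image of every branch through `v`; the
appended bit `v (Fin.last N)` keeps the images of different branches apart. -/
structure Scheme where
  node : ∀ N, (Fin N → Bool) → List Bool
  append_prefix : ∀ N v, node N (Fin.init v) ++ [v (Fin.last N)] <+: node (N + 1) v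

namespace Scheme

variable (T : Scheme)

theorem node_prefix_node (x : ℕ → Bool) {N M : ℕ} (h : N ≤ M) :
    T.node N (x ∘ Fin.val) <+: T.node M (x ∘ Fin.val) := by
  induction M, h using Nat.le_induction with
  | base => exact List.prefix_refl _
  | succ M _ ih => exact ih.trans ((List.prefix_append _ _).trans (T.append_prefix M (x ∘ Fin.val)))

theorem le_length_node (N : ℕ) (v : Fin N → Bool) : N ≤ (T.node N v).length := by
  induction N with
  | zero => exact Nat.zero_le _
  | succ N ih =>
    have := (T.append_prefix N v).length_le
    simp only [List.length_append, List.length_singleton] at this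
    exact (Nat.succ_le_succ (ih _)).trans this

def lim (x : ℕ → Bool) : ℕ → Bool := fun n => (T.node (n + 1) (x ∘ Fin.val)).getD n false

theorem lim_mem_cyl (x : ℕ → Bool) (N : ℕ) : T.lim x ∈ cyl (T.node N (x ∘ Fin.val)) := by
  intro i hi
  have hi' : i < (T.node (i + 1) (x ∘ Fin.val)).length := T.le_length_node _ _
  have h₁ := T.node_prefix_node x (le_max_left N (i + 1))
  have h₂ := T.node_prefix_node x (le_max_right N (i + 1))
  rw [lim, List.getD_eq_getElem _ _ hi', h₂.getElem hi', ← h₁.getElem hi]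

theorem lim_apply_length (x : ℕ → Bool) (N : ℕ) :
    T.lim x (T.node N (x ∘ Fin.val)).length = x N :=
  apply_length_of_mem_cyl (cyl_anti (T.append_prefix N (x ∘ Fin.val)) (T.lim_mem_cyl x (N + 1)))

theorem lim_injective : Injective T.lim := by
  intro x y h
  have key : ∀ N, (x ∘ Fin.val : Fin N → Bool) = y ∘ Fin.val := by
    intro N
    induction N with
    | zero => exact Subsingleton.elim _ _
    | succ N ih =>
      have : x N = y N := by
        rw [← T.lim_apply_length x N, ← T.lim_apply_length y N, h, ih]
      exact funext (Fin.lastCases this fun i => congrFun ih i)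
  exact funext fun n => congrFun (key (n + 1)) (Fin.last n)

theorem continuous_lim : Continuous T.lim :=
  continuous_pi fun n =>
    (continuous_of_discreteTopology (f := fun v : Fin (n + 1) → Bool => (T.node (n + 1) v).getD n
      false)).comp (continuous_pi fun i => continuous_apply (i : ℕ))

end Scheme

def nodesOfNext (next : ∀ N, ((Fin N → Bool) → List Bool) → (Fin N → Bool) → List Bool) :
    ∀ N, (Fin N → Bool) → List Bool
  | 0 => next 0 fun _ => []
  | N + 1 => next (N + 1) fun v => nodesOfNext next N (Fin.init v) ++ [v (Fin.last N)]

theorem Scheme.exists_forall_of_exists_prefix {Q : ∀ N, ((Fin N → Bool) → List Bool) → Prop}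
    (h : ∀ N (A : (Fin N → Bool) → List Bool), ∃ A', (∀ v, A v <+: A' v) ∧ Q N A') :
    ∃ T : Scheme, ∀ N, Q N (T.node N) := by
  choose next hprefix hQ using h
  exact ⟨⟨nodesOfNext next, fun N v =>
    hprefix (N + 1) (fun v => nodesOfNext next N (Fin.init v) ++ [v (Fin.last N)]) v⟩,
    fun N => by cases N <;> exact hQ _ _⟩

theorem eventually_injective_comp_val {α ι : Type*} [Finite ι] {ξ : ι → ℕ → α}
    (hξ : Injective ξ) : ∀ᶠ L in atTop, Injective fun i => (ξ i ∘ Fin.val : Fin L → α) := by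
  have h : ∀ i i', ∀ᶠ L in atTop, (ξ i ∘ Fin.val : Fin L → α) = ξ i' ∘ Fin.val → i = i' := by
    intro i i'
    by_cases hii : i = i'
    · exact Eventually.of_forall fun _ _ => hii
    obtain ⟨d, hd⟩ := Function.ne_iff.1 (hξ.ne hii)
    filter_upwards [eventually_gt_atTop d] with L hL heq
    exact absurd (congrFun heq ⟨d, hL⟩) hd
  filter_upwards [eventually_all.2 fun i => eventually_all.2 (h i)] with L hL i i' using hL i i'

/-- Mycielski's theorem for Cantor space. -/
theorem exists_perfect_forall_injective_mem (R : ∀ k, Set (Fin k → ℕ → Bool))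
    (hR : ∀ k, R k ∈ residual _) :
    ∃ P : Set (ℕ → Bool), P.Nonempty ∧ Perfect P ∧
      ∀ k (z : Fin k → ℕ → Bool), Injective z → (∀ i, z i ∈ P) → z ∈ R k := by
  choose D hDo hDd hDR using fun k => exists_dense_open_iInter_subset (hR k)
  obtain ⟨T, hT⟩ := Scheme.exists_forall_of_exists_prefix (exists_prefix_isFusionLevel hDo hDd)
  refine ⟨range T.lim, range_nonempty _, ⟨(isCompact_range T.continuous_lim).isClosed,
    preperfect_range_of_continuous_injective T.continuous_lim T.lim_injective⟩,
    fun k z hz hzP => ?_⟩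
  choose ξ hξ using hzP
  obtain rfl : T.lim ∘ ξ = z := funext hξ
  refine hDR k (mem_iInter.2 fun j => ?_)
  obtain ⟨L, ⟨hkL, hjL⟩, hsep⟩ := ((eventually_ge_atTop k).and (eventually_ge_atTop j)).and
    (eventually_injective_comp_val hz.of_comp) |>.exists
  exact hT L k hkL j hjL _ hsep fun i _ => T.lim_mem_cyl (ξ i) L

end Cantor

def freeTuples {α : Type*} {m : ℕ} (f : (Fin m → α) → α) (k : ℕ) : Set (Fin k → α) :=
  {w | ∀ (j : Fin k) (π : Fin m → Fin k), (∀ i, π i ≠ j) → f (w ∘ π) ≠ w j}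

theorem freeTuples_mem_residual {X : Type*} [TopologicalSpace X] [SecondCountableTopology X]
    [T2Space X] [PerfectSpace X] [MeasurableSpace X] [BorelSpace X] {m : ℕ}
    {f : (Fin m → X) → X} (hf : Measurable f) (k : ℕ) :
    freeTuples f k ∈ residual (Fin k → X) := by
  refine eventually_all.2 fun j => eventually_all.2 fun π =>
    eventually_imp_distrib_left.2 fun hπ => ?_
  let g : ({i // i ≠ j} → X) → X := fun u => f fun i => u ⟨π i, hπ i⟩
  have hg : Measurable g := hf.comp (measurable_pi_lambda _ fun i => measurable_pi_apply _)
  let φ := (Homeomorph.piSplitAt j fun _ => X).trans (Homeomorph.prodComm _ _)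
  exact hg.isMeagre_graph.preimage_of_isOpenMap φ.continuous φ.isOpenMap

theorem free_of_forall_injective_mem_freeTuples {α : Type*} {m : ℕ} {f : (Fin m → α) → α}
    {P : Set α} (hP : ∀ k (z : Fin k → α), Injective z → (∀ i, z i ∈ P) → z ∈ freeTuples f k)
    (a : Fin m → α) (ha : ∀ i, a i ∈ P) : (∃ i, f a = a i) ∨ f a ∉ P := by
  refine or_iff_not_imp_left.2 fun hfa hfaP => ?_
  have := ((finite_range a).insert (f a)).to_subtype
  have e := Finite.equivFin (insert (f a) (range a) : Set α)
  refine hP _ (Subtype.val ∘ e.symm) (Subtype.val_injective.comp e.symm.injective) (fun i => ?_)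
    (e ⟨f a, mem_insert _ _⟩) (fun i => e ⟨a i, mem_insert_of_mem _ ⟨i, rfl⟩⟩)
    (fun i h => hfa ⟨i, (congrArg Subtype.val (e.injective h)).symm⟩)
    (by simp only [comp_def, Equiv.symm_apply_apply])
  rcases (e.symm i).2 with h | ⟨i', h⟩
  · rw [comp_apply, h]
    exact hfaP
  · rw [comp_apply, ← h]
    exact ha i'

theorem borel_function_has_perfect_free_subset_general
    (m : ℕ)
    (f : (Fin m → (ℕ → Bool)) → (ℕ → Bool)) (hf : Measurable f) :
    ∃ P : Set (ℕ → Bool), P.Nonempty ∧ Perfect P ∧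
      ∀ a : Fin m → (ℕ → Bool), (∀ i, a i ∈ P) →
        (∃ i, f a = a i) ∨ f a ∉ P := by
  obtain ⟨P, hPne, hP, hfree⟩ :=
    Cantor.exists_perfect_forall_injective_mem _ (freeTuples_mem_residual hf)
  exact ⟨P, hPne, hP, free_of_forall_injective_mem_freeTuples hfree⟩

/-- Every Borel measurable function `f : (2^ω)^m → 2^ω` (with `m ≥ 1`) has a nonempty
perfect free subset. -/
theorem borel_function_has_perfect_free_subset
    (m : ℕ) (hm : 1 ≤ m)
    (f : (Fin m → (ℕ → Bool)) → (ℕ → Bool)) (hf : Measurable f) :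
    ∃ P : Set (ℕ → Bool), P.Nonempty ∧ Perfect P ∧
      ∀ a : Fin m → (ℕ → Bool), (∀ i, a i ∈ P) →
        (∃ i, f a = a i) ∨ f a ∉ P :=
  borel_function_has_perfect_free_subset_general m f hf
end

section
/- Assume the continuum hypothesis (the cardinality of the continuum equals ℵ₁). Then there exists a function f : ℝ × ℝ → ℝ such that every set A ⊆ ℝ that is free for f is at most countable. -/
/-!
Under CH, enumerate the injective sequences of reals, and the reals themselves (as constant
sequences), in order type `ω₁`. For each real `x`, only countably many injective sequences `t`
come before `x`, so one can choose pairwise distinct points `y_t` in the tails `t (n + 1)` and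
set `f (x, y_t) = t 0`. If `A` were an uncountable free set, take an injective sequence `t` in
`A` and a point `a ∈ A`, `a ≠ t 0`, coming after `t`: then `f (a, y_t) = t 0 ∈ A` is neither
`a` nor `y_t`.
-/

open Set Function Cardinal

def IsFree {α : Type*} (f : α × α → α) (A : Set α) : Prop :=
  ∀ a ∈ A, ∀ b ∈ A, f (a, b) = a ∨ f (a, b) = b ∨ f (a, b) ∉ A

theorem exists_injective_forall_mem_of_infinite {ι α : Type*} [Countable ι] (S : ι → Set α)
    (hS : ∀ i, (S i).Infinite) : ∃ g : ι → α, Injective g ∧ ∀ i, g i ∈ S i := by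
  classical
  obtain ⟨e, he⟩ := Countable.exists_injective_nat ι
  -- Hall's condition holds for finite subsets `t i ⊆ S i` with `#(t i) = e i + 1`.
  choose t htS htcard using fun i => (hS i).exists_subset_card_eq (e i + 1)
  obtain ⟨g, hg, hgt⟩ := (Finset.all_card_le_biUnion_card_iff_exists_injective t).1 fun s => by
    rcases s.eq_empty_or_nonempty with rfl | hs
    · simp
    obtain ⟨i, hi, hmax⟩ := s.exists_max_image e hs
    calc s.card ≤ (Finset.range (e i + 1)).card :=
          Finset.card_le_card_of_injOn e
            (fun j hj => Finset.mem_range.2 (Nat.lt_succ_of_le (hmax j hj))) he.injOn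
      _ = (t i).card := by rw [Finset.card_range, htcard]
      _ ≤ (s.biUnion t).card := Finset.card_le_card (Finset.subset_biUnion_of_mem t hi)
  exact ⟨g, hg, fun i => htS i (hgt i)⟩

section

variable {α W : Type*} [LinearOrder W] {σ : (ℕ → α) → W}

theorem exists_apply_succ_eq_apply_zero (hW : ∀ w : W, (Iic w).Countable) (hσ : Injective σ) :
    ∃ f : α × α → α, ∀ x (t : ℕ → α), Injective t → σ t < σ (const ℕ x) →
      ∃ n, f (x, t (n + 1)) = t 0 := by
  let D (x : α) : Set (ℕ → α) := {t | σ t < σ (const ℕ x) ∧ Injective t}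
  have hD : ∀ x, (D x).Countable := fun x => ((hW _).preimage hσ).mono fun _ ht => ht.1.le
  choose G hG hGmem using fun x => haveI := (hD x).to_subtype
    exists_injective_forall_mem_of_infinite (fun t : D x => range (t.1 ∘ Nat.succ))
      fun t => infinite_range_of_injective (t.2.2.comp Nat.succ_injective)
  refine ⟨fun z => extend (G z.1) (fun t => t.1 0) (fun _ => z.1) z.2, fun x t ht hlt => ?_⟩
  obtain ⟨n, hn⟩ := hGmem x ⟨t, hlt, ht⟩
  refine ⟨n, ?_⟩
  change extend (G x) (fun t => t.1 0) (fun _ => x) (t (n + 1)) = t 0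
  rw [show t (n + 1) = _ from hn, (hG x).extend_apply]

theorem IsFree.countable (hW : ∀ w : W, (Iic w).Countable) (hσ : Injective σ) {f : α × α → α}
    (hf : ∀ x (t : ℕ → α), Injective t → σ t < σ (const ℕ x) → ∃ n, f (x, t (n + 1)) = t 0)
    {A : Set α} (hA : IsFree f A) : A.Countable := by
  by_contra hAc
  have hinf : A.Infinite := fun h => hAc h.countable
  let t : ℕ → α := fun n => hinf.natEmbedding A n
  have ht : Injective t := Subtype.coe_injective.comp (hinf.natEmbedding A).injective
  have htA : ∀ n, t n ∈ A := fun n => (hinf.natEmbedding A n).2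
  have hbad : ({x | σ (const ℕ x) ≤ σ t} ∪ {t 0}).Countable :=
    ((hW (σ t)).preimage (hσ.comp (const_injective (α := ℕ)))).union (countable_singleton _)
  obtain ⟨a, haA, hab⟩ : (A \ ({x | σ (const ℕ x) ≤ σ t} ∪ {t 0})).Nonempty :=
    nonempty_iff_ne_empty.2 fun h => hAc ((h ▸ countable_empty).of_sdiff hbad)
  simp only [mem_union, mem_ofPred_eq, mem_singleton_iff, not_or, not_le] at hab
  obtain ⟨n, hn⟩ := hf a t ht hab.1
  rcases hA a haA (t (n + 1)) (htA _) with h | h | h <;> rw [hn] at h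
  · exact hab.2 h.symm
  · exact Nat.succ_ne_zero n (ht h).symm
  · exact h (htA 0)

theorem exists_forall_isFree_countable (hW : ∀ w : W, (Iic w).Countable) (hσ : Injective σ) :
    ∃ f : α × α → α, ∀ A, IsFree f A → A.Countable :=
  (exists_apply_succ_eq_apply_zero hW hσ).imp fun _ hf _ hA => hA.countable hW hσ hf

end

theorem countable_Iic_toType_ord_aleph_one (w : (ℵ₁ : Cardinal).ord.ToType) :
    (Iic w).Countable := by
  rw [← Iio_insert, countable_insert, ← le_aleph0_iff_set_countable, ← lt_aleph_one_iff]
  simpa using mk_Iio_lt w (by simp)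

theorem exists_forall_isFree_countable_of_mk_le_aleph_one {α : Type*} (h : #(ℕ → α) ≤ ℵ₁) :
    ∃ f : α × α → α, ∀ A, IsFree f A → A.Countable := by
  rw [← mk_ord_toType ℵ₁, le_def] at h
  obtain ⟨σ⟩ := h
  exact exists_forall_isFree_countable countable_Iic_toType_ord_aleph_one σ.injective

/-- Under CH there is a function `f : ℝ × ℝ → ℝ` all of whose free subsets are at most
countable. -/
theorem CH_function_with_only_countable_free_sets
    (ch : Cardinal.continuum = Cardinal.aleph 1) :
    ∃ f : ℝ × ℝ → ℝ, ∀ A : Set ℝ,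
      (∀ a ∈ A, ∀ b ∈ A, f (a, b) = a ∨ f (a, b) = b ∨ f (a, b) ∉ A) →
      A.Countable := by
  have ch₀ : 𝔠 = (ℵ₁ : Cardinal.{0}) := by
    rw [← lift_inj, lift_continuum, lift_aleph, Ordinal.lift_one, ch]
  have hseq : #(ℕ → ℝ) = ℵ₁ := by
    rw [mk_arrow, lift_id, lift_id, mk_real, mk_nat, continuum_power_aleph0, ch₀]
  exact exists_forall_isFree_countable_of_mk_le_aleph_one hseq.le
end

section
/- For every Borel measurable function f : ℝ → ℝ there exists a Borel set A ⊆ ℝ of positive Lebesgue measure such that A is free for f, i.e., for every a ∈ A either f(a) = a or f(a) ∉ A. -/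
open MeasureTheory

/-- Every Borel measurable function `f : ℝ → ℝ` has a Borel free subset of positive
Lebesgue measure. -/
theorem borel_function_has_positive_measure_free_subset
    (f : ℝ → ℝ) (hf : Measurable f) :
    ∃ A : Set ℝ, MeasurableSet A ∧ 0 < volume A ∧
      ∀ a ∈ A, f a = a ∨ f a ∉ A := by
  by_cases hF : 0 < volume {x : ℝ | f x = x}
  · exact ⟨{x : ℝ | f x = x}, measurableSet_eq_fun hf measurable_id, hF,
      fun a ha => Or.inl ha⟩
  · push_neg at hF
    have hF0 : volume {x : ℝ | f x = x} = 0 := le_antisymm hF bot_le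
    set S : ℚ → Set ℝ := fun q => {x : ℝ | x < (q : ℝ) ∧ (q : ℝ) < f x} with hS
    set T : ℚ → Set ℝ := fun q => {x : ℝ | f x < (q : ℝ) ∧ (q : ℝ) < x} with hT
    have hmS : ∀ q : ℚ, MeasurableSet (S q) := fun q =>
      (measurableSet_lt measurable_id measurable_const).inter
        (measurableSet_lt measurable_const hf)
    have hmT : ∀ q : ℚ, MeasurableSet (T q) := fun q =>
      (measurableSet_lt hf measurable_const).inter
        (measurableSet_lt measurable_const measurable_id)
    have hcover : {x : ℝ | f x ≠ x} ⊆ ⋃ q : ℚ, S q ∪ T q := by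
      intro x hx
      rcases lt_or_gt_of_ne hx with h | h
      · obtain ⟨q, hq1, hq2⟩ := exists_rat_btwn h
        exact Set.mem_iUnion.2 ⟨q, Or.inr ⟨hq1, hq2⟩⟩
      · obtain ⟨q, hq1, hq2⟩ := exists_rat_btwn h
        exact Set.mem_iUnion.2 ⟨q, Or.inl ⟨hq1, hq2⟩⟩
    have hpos : 0 < volume (⋃ q : ℚ, S q ∪ T q) := by
      rw [pos_iff_ne_zero]
      intro h0
      have hne : volume {x : ℝ | f x ≠ x} = 0 := measure_mono_null hcover h0
      have huniv : (Set.univ : Set ℝ) ⊆ {x : ℝ | f x = x} ∪ {x : ℝ | f x ≠ x} := by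
        intro x _
        by_cases hx : f x = x
        · exact Or.inl hx
        · exact Or.inr hx
      have : volume (Set.univ : Set ℝ) = 0 :=
        measure_mono_null huniv (measure_union_null hF0 hne)
      simp [Real.volume_univ] at this
    obtain ⟨q, hq⟩ : ∃ q : ℚ, 0 < volume (S q ∪ T q) := by
      by_contra h
      push_neg at h
      have : volume (⋃ q : ℚ, S q ∪ T q) = 0 :=
        measure_iUnion_null fun q => le_antisymm (h q) bot_le
      exact hpos.ne' this
    have hsum : 0 < volume (S q) ∨ 0 < volume (T q) := by
      by_contra h
      push_neg at h
      have h1 : volume (S q) = 0 := le_antisymm h.1 bot_le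
      have h2 : volume (T q) = 0 := le_antisymm h.2 bot_le
      exact hq.ne' (measure_union_null h1 h2)
    rcases hsum with h | h
    · refine ⟨S q, hmS q, h, fun a ha => Or.inr fun hmem => ?_⟩
      exact lt_asymm ha.2 hmem.1
    · refine ⟨T q, hmT q, h, fun a ha => Or.inr fun hmem => ?_⟩
      exact lt_asymm ha.1 hmem.2
end

section
/- For every Borel measurable function f : ℝ → ℝ there exists a non-meager set A ⊆ ℝ with the Baire property such that A is free for f, i.e., for every a ∈ A either f(a) = a or f(a) ∉ A. -/
open Set

/-- Every Borel measurable function `f : ℝ → ℝ` has a non-meager free subset with the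
Baire property. -/
theorem borel_function_has_nonmeager_free_subset
    (f : ℝ → ℝ) (hf : Measurable f) :
    ∃ A : Set ℝ, BaireMeasurableSet A ∧ ¬ IsMeagre A ∧
      ∀ a ∈ A, f a = a ∨ f a ∉ A := by
  classical
  set F : Set ℝ := {x | f x = x} with hF
  set S : ℚ × ℚ × ℚ × ℚ → Set ℝ := fun p =>
    if Disjoint (Ioo (p.1 : ℝ) p.2.1) (Ioo (p.2.2.1 : ℝ) p.2.2.2) then
      Ioo (p.1 : ℝ) p.2.1 ∩ f ⁻¹' Ioo (p.2.2.1 : ℝ) p.2.2.2 else ∅ with hS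
  have hSmeas : ∀ p, MeasurableSet (S p) := by
    intro p
    simp only [hS]
    split
    · exact measurableSet_Ioo.inter (hf measurableSet_Ioo)
    · exact MeasurableSet.empty
  have hSfree : ∀ p, ∀ a ∈ S p, f a ∉ S p := by
    intro p a ha
    simp only [hS] at ha ⊢
    by_cases hd : Disjoint (Ioo (p.1 : ℝ) p.2.1) (Ioo (p.2.2.1 : ℝ) p.2.2.2)
    · rw [if_pos hd] at ha ⊢
      rintro ⟨hfa1, -⟩
      exact (hd.ne_of_mem hfa1 ha.2) rfl
    · rw [if_neg hd] at ha; exact ha.elim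
  have hcover : (univ : Set ℝ) ⊆ F ∪ ⋃ p, S p := by
    intro x _
    by_cases hx : f x = x
    · exact Or.inl hx
    right
    rcases lt_or_gt_of_ne hx with h | h
    · -- f x < x
      obtain ⟨c, hc⟩ := exists_rat_gt x
      obtain ⟨m, hm1, hm2⟩ := exists_rat_btwn h
      obtain ⟨a, ha⟩ := exists_rat_lt (f x)
      refine mem_iUnion.2 ⟨(m, c, a, m), ?_⟩
      simp only [hS]
      rw [if_pos]
      · exact ⟨⟨hm2, hc⟩, ha, hm1⟩
      · exact (Set.Ioo_disjoint_Ioo.2 (by simp)).symm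
    · obtain ⟨a, ha⟩ := exists_rat_lt x
      obtain ⟨m, hm1, hm2⟩ := exists_rat_btwn h
      obtain ⟨d, hd⟩ := exists_rat_gt (f x)
      refine mem_iUnion.2 ⟨(a, m, m, d), ?_⟩
      simp only [hS]
      rw [if_pos]
      · exact ⟨⟨ha, hm1⟩, hm2, hd⟩
      · exact Set.Ioo_disjoint_Ioo.2 (by simp)
  by_cases hFm : IsMeagre F
  · -- some S p is non-meager
    have : ∃ p, ¬ IsMeagre (S p) := by
      by_contra hall
      push_neg at hall
      have hU : IsMeagre (⋃ p, S p) := by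
        rw [IsMeagre, compl_iUnion]
        exact (countable_iInter_mem).2 fun p => hall p
      have hFU : IsMeagre (F ∪ ⋃ p, S p) := by
        rw [IsMeagre, compl_union]
        exact Filter.inter_mem hFm hU
      have : IsMeagre (univ : Set ℝ) := hFU.mono hcover
      rw [IsMeagre, compl_univ] at this
      exact (dense_of_mem_residual this).nonempty.elim (fun x hx => hx)
    obtain ⟨p, hp⟩ := this
    exact ⟨S p, (hSmeas p).baireMeasurableSet, hp, fun a ha => Or.inr (hSfree p a ha)⟩
  · refine ⟨F, ?_, hFm, fun a ha => Or.inl ha⟩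
    exact (measurableSet_eq_fun hf measurable_id).baireMeasurableSet
end

section
/- Let f : ℝ × ℝ → ℝ be the continuous function f(x, y) = |x − y| + x. Then every Lebesgue measurable set A ⊆ ℝ that is free for f is Lebesgue null, and every set A ⊆ ℝ with the Baire property that is free for f is meager. -/
/-!
For `f (x, y) = |x - y| + x` and `d > 0` we have `f (y + d, y) = y + 2d`, so a free set contains
no three-term progression `y, y + d, y + 2d`. But a set of positive measure contains such
progressions for every small `d`, because translation is continuous in measure; and so does a
non-meagre set with the Baire property, because it agrees with a nonempty open set up to a
meagre set.
-/

open MeasureTheory Filter Topology Set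
open scoped symmDiff ENNReal

def IsFreeFor {α : Type*} (f : α → α → α) (A : Set α) : Prop :=
  ∀ a ∈ A, ∀ b ∈ A, f a b ∈ ({a, b} : Set α) ∨ f a b ∉ A

def threeAPStarts {G : Type*} [AddMonoid G] (s : Set G) (d : G) : Set G :=
  s ∩ (· + d) ⁻¹' s ∩ (· + 2 • d) ⁻¹' s

theorem threeAPStarts_mono {G : Type*} [AddMonoid G] {s t : Set G} (h : s ⊆ t) (d : G) :
    threeAPStarts s d ⊆ threeAPStarts t d :=
  inter_subset_inter (inter_subset_inter h (preimage_mono h)) (preimage_mono h)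

theorem threeAPStarts_eq_empty_of_isFreeFor {α : Type*} [AddCommGroup α] [LinearOrder α]
    [IsOrderedAddMonoid α] {A : Set α} (hA : IsFreeFor (fun a b => |a - b| + a) A) {d : α}
    (hd : 0 < d) : threeAPStarts A d = ∅ := by
  refine eq_empty_of_forall_notMem fun y ⟨⟨hy₀, hy₁⟩, hy₂⟩ => ?_
  have hf : |(y + d) - y| + (y + d) = y + 2 • d := by
    rw [add_sub_cancel_left, abs_of_pos hd]; abel
  rcases hA (y + d) hy₁ y hy₀ with h | h <;> simp only [hf] at h
  · have hne₁ : y + 2 • d ≠ y + d := by simpa [two_nsmul] using hd.ne'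
    have hne₂ : y + 2 • d ≠ y := by simpa using (nsmul_pos hd two_ne_zero).ne'
    rcases h with h | h
    exacts [hne₁ h, hne₂ h]
  · exact h hy₂

section Measure

variable {G : Type*} [AddGroup G] [TopologicalSpace G] [IsTopologicalAddGroup G]
  [MeasurableSpace G] [BorelSpace G] {μ : Measure G} [μ.IsAddRightInvariant]
  [μ.InnerRegularCompactLTTop] [IsLocallyFiniteMeasure μ] {s : Set G}

theorem tendsto_measure_preimage_add_right_symmDiff (hs : NullMeasurableSet s μ)
    (hμs : μ s ≠ ∞) : Tendsto (fun t => μ (((· + t) ⁻¹' s) ∆ s)) (𝓝 0) (𝓝 0) := by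
  have hcont : Continuous (ContinuousMap.addRight : G → C(G, G)) :=
    (ContinuousMap.curry ⟨fun p : G × G => p.2 + p.1, by fun_prop⟩).continuous
  have h := tendsto_measure_symmDiff_preimage_nhds_zero (hcont.tendsto 0)
    (.of_forall fun t => measurePreserving_add_right μ t)
    (by simpa using measurePreserving_add_right μ 0) hs hμs
  simpa using h

theorem eventually_measure_threeAPStarts_ne_zero (hs : NullMeasurableSet s μ) (hμs₀ : μ s ≠ 0)
    (hμs : μ s ≠ ∞) : ∀ᶠ d in 𝓝 0, μ (threeAPStarts s d) ≠ 0 := by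
  have hsmall : Tendsto (fun d : G => μ (((· + d) ⁻¹' s) ∆ s) + μ (((· + 2 • d) ⁻¹' s) ∆ s))
      (𝓝 0) (𝓝 0) := by
    have h := tendsto_measure_preimage_add_right_symmDiff hs hμs
    have h2 : Tendsto (fun d : G => 2 • d) (𝓝 0) (𝓝 0) := by
      simpa using (continuous_nsmul 2).tendsto (0 : G)
    simpa using h.add (h.comp h2)
  filter_upwards [hsmall.eventually (gt_mem_nhds (pos_iff_ne_zero.2 hμs₀))] with d hd hzero
  have hcover : s ⊆ threeAPStarts s d ∪ ((· + d) ⁻¹' s) ∆ s ∪ ((· + 2 • d) ⁻¹' s) ∆ s := by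
    intro y hy
    by_cases h₁ : y + d ∈ s
    · by_cases h₂ : y + 2 • d ∈ s
      · exact .inl (.inl ⟨⟨hy, h₁⟩, h₂⟩)
      · exact .inr (.inr ⟨hy, h₂⟩)
    · exact .inl (.inr (.inr ⟨hy, h₁⟩))
  refine hd.not_ge ?_
  calc μ s ≤ μ (threeAPStarts s d) + μ (((· + d) ⁻¹' s) ∆ s) + μ (((· + 2 • d) ⁻¹' s) ∆ s) :=
        (measure_mono hcover).trans <|
          (measure_union_le _ _).trans (add_le_add_left (measure_union_le _ _) _)
    _ = _ := by rw [hzero, zero_add]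

end Measure

theorem Filter.EventuallyEq.isMeagre_iff {X : Type*} [TopologicalSpace X] {s t : Set X}
    (h : s =ᵇ t) : IsMeagre s ↔ IsMeagre t :=
  congr_sets h.compl.mem_iff

section Baire

variable {G : Type*} [AddGroup G] [TopologicalSpace G] [IsTopologicalAddGroup G] {s t : Set G}

theorem IsOpen.threeAPStarts (hs : IsOpen s) (d : G) : IsOpen (threeAPStarts s d) :=
  (hs.inter (hs.preimage (continuous_add_const d))).inter (hs.preimage (continuous_add_const _))

theorem eventually_threeAPStarts_nonempty_of_isOpen (hs : IsOpen s) {x : G} (hx : x ∈ s) :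
    ∀ᶠ d in 𝓝 0, (threeAPStarts s d).Nonempty := by
  have hmem (n : ℕ) : ∀ᶠ d in 𝓝 (0 : G), x + n • d ∈ s := by
    have h : Tendsto (fun d : G => x + n • d) (𝓝 0) (𝓝 x) :=
      (continuous_const.add (continuous_nsmul n)).tendsto' 0 x (by simp)
    exact h.eventually (hs.mem_nhds hx)
  filter_upwards [hmem 1, hmem 2] with d h₁ h₂
  exact ⟨x, ⟨hx, by simpa using h₁⟩, h₂⟩

theorem Filter.EventuallyEq.threeAPStarts (h : s =ᵇ t) (d : G) :
    threeAPStarts s d =ᵇ threeAPStarts t d :=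
  have htrans (c : G) : (· + c) ⁻¹' s =ᵇ (· + c) ⁻¹' t :=
    h.filter_mono (tendsto_residual_of_isOpenMap (continuous_add_const c) (isOpenMap_add_right c))
  (h.inter (htrans d)).inter (htrans _)

theorem BaireMeasurableSet.eventually_threeAPStarts_nonempty [BaireSpace G]
    (hs : BaireMeasurableSet s) (hs' : ¬IsMeagre s) :
    ∀ᶠ d in 𝓝 0, (threeAPStarts s d).Nonempty := by
  obtain ⟨u, hu, hsu⟩ := hs.residualEq_isOpen
  obtain ⟨x, hx⟩ : u.Nonempty := nonempty_of_not_isMeagre (hsu.isMeagre_iff.not.1 hs')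
  filter_upwards [eventually_threeAPStarts_nonempty_of_isOpen hu hx] with d hd
  exact nonempty_of_not_isMeagre <| (hsu.threeAPStarts d).isMeagre_iff.not.2 <|
    not_isMeagre_of_isOpen (hu.threeAPStarts d) hd

end Baire

theorem volume_eq_zero_of_threeAPStarts_eq_empty {A : Set ℝ} (hA : NullMeasurableSet A volume)
    (hAP : ∀ d > 0, threeAPStarts A d = ∅) : volume A = 0 := by
  by_contra hA₀
  obtain ⟨S, hSA, hS, hSA'⟩ := hA.exists_measurable_subset_ae_eq
  obtain ⟨T, hTm, hTS, hT₀, hT⟩ := Measure.exists_subset_measure_lt_top hS (r := 0)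
    (by rwa [measure_congr hSA', pos_iff_ne_zero])
  obtain ⟨d, hd, hTd⟩ := (eventually_measure_threeAPStarts_ne_zero hTm.nullMeasurableSet
    hT₀.ne' hT.ne).exists_gt
  exact hTd (measure_mono_null (threeAPStarts_mono (hTS.trans hSA) d) (by simp [hAP d hd]))

theorem isMeagre_of_threeAPStarts_eq_empty {A : Set ℝ} (hA : BaireMeasurableSet A)
    (hAP : ∀ d > 0, threeAPStarts A d = ∅) : IsMeagre A := by
  by_contra hA'
  obtain ⟨d, hd, hAd⟩ := (hA.eventually_threeAPStarts_nonempty hA').exists_gt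
  exact hAd.ne_empty (hAP d hd)

/-- For the continuous function `f(x,y) = |x - y| + x`, every Lebesgue measurable free
set is null and every free set with the Baire property is meager. -/
theorem free_sets_for_abs_diff_plus_x_are_small :
    ∀ A : Set ℝ,
      (∀ a ∈ A, ∀ b ∈ A,
        (|a - b| + a = a ∨ |a - b| + a = b) ∨ |a - b| + a ∉ A) →
      (NullMeasurableSet A volume → volume A = 0) ∧
      (BaireMeasurableSet A → IsMeagre A) := by
  intro A hF
  have hAP (d : ℝ) (hd : 0 < d) : threeAPStarts A d = ∅ :=
    threeAPStarts_eq_empty_of_isFreeFor hF hd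
  exact ⟨fun hA => volume_eq_zero_of_threeAPStarts_eq_empty hA hAP,
    fun hA => isMeagre_of_threeAPStarts_eq_empty hA hAP⟩
end

section
/- There is a meager set M ⊆ ω^ω × ω^ω such that for every superperfect tree T ⊆ ω^{<ω} there exist branches f, g ∈ [T] with f ≠ g and (f, g) ∈ M. In particular, no superperfect set can consist of pairwise 'mutually generic' reals avoiding all ground-model meager sets in the plane. -/
/-- `T ⊆ ω^{<ω}` is a tree: closed under initial segments. -/
def IsTreeN (T : Set (List ℕ)) : Prop :=
  ∀ σ ∈ T, ∀ τ : List ℕ, τ <+: σ → τ ∈ T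

/-- `T` is superperfect: a nonempty tree in which every node has an ω-splitting
extension. -/
def Superperfect (T : Set (List ℕ)) : Prop :=
  T.Nonempty ∧ IsTreeN T ∧
    ∀ σ ∈ T, ∃ τ ∈ T, σ <+: τ ∧ {n : ℕ | τ ++ [n] ∈ T}.Infinite

/-- The set of branches `[T]` of a tree `T ⊆ ω^{<ω}`. -/
def branches (T : Set (List ℕ)) : Set (ℕ → ℕ) :=
  {x : ℕ → ℕ | ∀ n : ℕ, (List.range n).map x ∈ T}


namespace SPMeager

/-! ### Running maxima and the meager set -/

/-- `Mx f n = max (f 0, ..., f n)`. -/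
def Mx (f : ℕ → ℕ) : ℕ → ℕ
  | 0 => f 0
  | n + 1 => max (Mx f n) (f (n + 1))

lemma le_Mx (f : ℕ → ℕ) : ∀ {n j : ℕ}, j ≤ n → f j ≤ Mx f n := by
  intro n
  induction n with
  | zero =>
    intro j hj
    have : j = 0 := Nat.le_zero.mp hj
    subst this; exact le_rfl
  | succ n ih =>
    intro j hj
    rcases Nat.lt_or_ge j (n + 1) with h | h
    · exact le_trans (ih (Nat.lt_succ_iff.mp h)) (le_max_left _ _)
    · have : j = n + 1 := le_antisymm hj h
      subst this; exact le_max_right _ _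

lemma Mx_lt (f : ℕ → ℕ) {B : ℕ} : ∀ {n : ℕ}, (∀ j ≤ n, f j < B) → Mx f n < B := by
  intro n
  induction n with
  | zero => intro h; exact h 0 le_rfl
  | succ n ih =>
    intro h
    exact max_lt (ih fun j hj => h j (le_trans hj (Nat.le_succ _))) (h (n + 1) le_rfl)

lemma Mx_le (f : ℕ → ℕ) {B : ℕ} : ∀ {n : ℕ}, (∀ j ≤ n, f j ≤ B) → Mx f n ≤ B := by
  intro n
  induction n with
  | zero => intro h; exact h 0 le_rfl
  | succ n ih =>
    intro h
    exact max_le (ih fun j hj => h j (le_trans hj (Nat.le_succ _))) (h (n + 1) le_rfl)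

lemma Mx_congr {f g : ℕ → ℕ} : ∀ {n : ℕ}, (∀ j ≤ n, f j = g j) → Mx f n = Mx g n := by
  intro n
  induction n with
  | zero => intro h; exact h 0 le_rfl
  | succ n ih =>
    intro h
    have h1 : Mx f n = Mx g n := ih fun j hj => h j (le_trans hj (Nat.le_succ _))
    simp only [Mx, h1, h (n + 1) le_rfl]

/-- The basic closed nowhere dense pieces: pairs whose running maxima
disagree at every coordinate `≥ N`. -/
def C (N : ℕ) : Set ((ℕ → ℕ) × (ℕ → ℕ)) :=
  {p | ∀ n : ℕ, N ≤ n → Mx p.1 n ≠ Mx p.2 n}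

abbrev X := (ℕ → ℕ) × (ℕ → ℕ)

/-- agreement neighborhoods are open -/
lemma isOpen_agree (p : X) (n : ℕ) :
    IsOpen {q : X | ∀ j ≤ n, q.1 j = p.1 j ∧ q.2 j = p.2 j} := by
  have : {q : X | ∀ j ≤ n, q.1 j = p.1 j ∧ q.2 j = p.2 j}
      = ⋂ j ∈ Finset.range (n + 1),
          (((fun q : X => q.1 j) ⁻¹' {p.1 j}) ∩ ((fun q : X => q.2 j) ⁻¹' {p.2 j})) := by
    ext q
    simp only [Set.mem_setOf_eq, Set.mem_iInter, Finset.mem_range, Set.mem_inter_iff,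
      Set.mem_preimage, Set.mem_singleton_iff, Nat.lt_succ_iff]
  rw [this]
  refine isOpen_biInter_finset fun j _ => ?_
  refine IsOpen.inter ?_ ?_
  · exact (isOpen_discrete {p.1 j}).preimage ((continuous_apply j).comp continuous_fst)
  · exact (isOpen_discrete {p.2 j}).preimage ((continuous_apply j).comp continuous_snd)

lemma isClosed_C (N : ℕ) : IsClosed (C N) := by
  have : C N = ⋂ n ∈ {n : ℕ | N ≤ n}, {p : X | Mx p.1 n ≠ Mx p.2 n} := by
    ext p; simp [C, Set.mem_setOf_eq]
  rw [this]
  refine isClosed_biInter fun n _ => ?_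
  rw [← isOpen_compl_iff]
  rw [isOpen_iff_forall_mem_open]
  intro p hp
  refine ⟨{q : X | ∀ j ≤ n, q.1 j = p.1 j ∧ q.2 j = p.2 j}, ?_, isOpen_agree p n, fun j _ => ⟨rfl, rfl⟩⟩
  intro q hq
  simp only [Set.mem_compl_iff, Set.mem_setOf_eq, not_not] at hp ⊢
  have h1 : Mx q.1 n = Mx p.1 n := Mx_congr fun j hj => (hq j hj).1
  have h2 : Mx q.2 n = Mx p.2 n := Mx_congr fun j hj => (hq j hj).2
  rw [h1, h2]; exact hp

lemma Mx_update (x : ℕ → ℕ) (m K : ℕ) (hK : Mx x m ≤ K) :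
    Mx (Function.update x m K) m = K := by
  refine le_antisymm ?_ ?_
  · refine Mx_le _ fun j hj => ?_
    rcases eq_or_ne j m with rfl | h
    · simp [Function.update_self]
    · rw [Function.update_of_ne h]
      exact le_trans (le_Mx x hj) hK
  · have := le_Mx (Function.update x m K) (le_refl m)
    simpa [Function.update_self] using this

lemma interior_C (N : ℕ) : interior (C N) = ∅ := by
  by_contra h
  obtain ⟨p, hp⟩ := Set.nonempty_iff_ne_empty.mpr h
  have hnh : C N ∈ nhds p := mem_interior_iff_mem_nhds.mp hp
  rw [mem_nhds_prod_iff] at hnh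
  obtain ⟨u, hu, v, hv, huv⟩ := hnh
  obtain ⟨u', hu'sub, hu'open, hpu'⟩ := mem_nhds_iff.mp hu
  obtain ⟨v', hv'sub, hv'open, hpv'⟩ := mem_nhds_iff.mp hv
  obtain ⟨I₁, s₁, hs₁, hsub₁⟩ := (isOpen_pi_iff.mp hu'open) p.1 hpu'
  obtain ⟨I₂, s₂, hs₂, hsub₂⟩ := (isOpen_pi_iff.mp hv'open) p.2 hpv'
  classical
  set m : ℕ := max N (max (I₁.sup id + 1) (I₂.sup id + 1)) with hm
  have hmN : N ≤ m := le_max_left _ _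
  have hm1 : ∀ j ∈ I₁, j ≠ m := by
    intro j hj
    have : j ≤ I₁.sup id := Finset.le_sup (f := id) hj
    omega
  have hm2 : ∀ j ∈ I₂, j ≠ m := by
    intro j hj
    have : j ≤ I₂.sup id := Finset.le_sup (f := id) hj
    omega
  set K : ℕ := max (Mx p.1 m) (Mx p.2 m) with hKdef
  set x' : ℕ → ℕ := Function.update p.1 m K with hx'
  set y' : ℕ → ℕ := Function.update p.2 m K with hy'
  have hx'mem : x' ∈ u' := by
    apply hsub₁
    intro j hj
    have : x' j = p.1 j := Function.update_of_ne (hm1 j hj) _ _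
    rw [this]
    exact (hs₁ j hj).2
  have hy'mem : y' ∈ v' := by
    apply hsub₂
    intro j hj
    have : y' j = p.2 j := Function.update_of_ne (hm2 j hj) _ _
    rw [this]
    exact (hs₂ j hj).2
  have hmemC : (x', y') ∈ C N := huv ⟨hu'sub hx'mem, hv'sub hy'mem⟩
  have hx : Mx x' m = K := Mx_update _ _ _ (le_max_left _ _)
  have hy : Mx y' m = K := Mx_update _ _ _ (le_max_right _ _)
  exact hmemC m hmN (by rw [hx, hy])

lemma isMeagre_M : IsMeagre (⋃ N : ℕ, C N) := by
  refine isMeagre_iUnion fun N => ?_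
  rw [isMeagre_iff_countable_union_isNowhereDense]
  refine ⟨{C N}, ?_, Set.countable_singleton _, by simp⟩
  intro t ht
  rw [Set.mem_singleton_iff] at ht
  subst ht
  rw [IsClosed.isNowhereDense_iff (isClosed_C N)]
  exact interior_C N


end SPMeager

namespace SPC

/-- max of a list of naturals -/
def maxL (l : List ℕ) : ℕ := l.foldr max 0

lemma le_maxL {l : List ℕ} {a : ℕ} (h : a ∈ l) : a ≤ maxL l := by
  induction l with
  | nil => cases h
  | cons x xs ih =>
    rcases List.mem_cons.mp h with rfl | h
    · exact le_max_left _ _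
    · exact le_trans (ih h) (le_max_right _ _)

lemma exists_gt_of_infinite {s : Set ℕ} (h : s.Infinite) (B : ℕ) : ∃ v, v ∈ s ∧ B < v := by
  obtain ⟨v, hv, hlt⟩ := h.exists_gt B
  exact ⟨v, hv, hlt⟩

open Classical in
/-- pick an element of an infinite set above `B` -/
noncomputable def pick (s : Set ℕ) (B : ℕ) : ℕ :=
  if h : s.Infinite then (exists_gt_of_infinite h B).choose else 0

lemma pick_mem {s : Set ℕ} (h : s.Infinite) (B : ℕ) : pick s B ∈ s := by
  rw [pick]; rw [dif_pos h]
  exact (exists_gt_of_infinite h B).choose_spec.1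

lemma pick_gt {s : Set ℕ} (h : s.Infinite) (B : ℕ) : B < pick s B := by
  rw [pick]; rw [dif_pos h]
  exact (exists_gt_of_infinite h B).choose_spec.2

section Tree

variable (T : Set (List ℕ)) (hT : Superperfect T)

def menu (σ : List ℕ) : Set ℕ := {n : ℕ | σ ++ [n] ∈ T}

open Classical in
/-- canonical splitting extension -/
noncomputable def sp (σ : List ℕ) : List ℕ :=
  if h : σ ∈ T then (hT.2.2 σ h).choose else []

lemma sp_spec {σ : List ℕ} (h : σ ∈ T) :
    sp T hT σ ∈ T ∧ σ <+: sp T hT σ ∧ (menu T (sp T hT σ)).Infinite := by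
  rw [sp]; rw [dif_pos h]
  obtain ⟨h1, h2, h3⟩ := (hT.2.2 σ h).choose_spec
  exact ⟨h1, h2, h3⟩

include hT in
lemma nil_mem : ([] : List ℕ) ∈ T := by
  obtain ⟨σ, hσ⟩ := hT.1
  exact hT.2.1 σ hσ [] List.nil_prefix

/-- one-step extension going through the next splitting node -/
noncomputable def grow (σ : List ℕ) : List ℕ :=
  sp T hT σ ++ [pick (menu T (sp T hT σ)) 0]

lemma grow_spec {σ : List ℕ} (h : σ ∈ T) :
    grow T hT σ ∈ T ∧ σ <+: grow T hT σ ∧ σ.length < (grow T hT σ).length := by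
  obtain ⟨h1, h2, h3⟩ := sp_spec T hT h
  have hm : grow T hT σ ∈ T := pick_mem h3 0
  have hpre : σ <+: grow T hT σ := h2.trans (List.prefix_append _ _)
  refine ⟨hm, hpre, ?_⟩
  have := h2.length_le
  simp only [grow, List.length_append, List.length_cons, List.length_nil]
  omega

lemma iter_grow_spec (σ : List ℕ) (h : σ ∈ T) (k : ℕ) :
    (grow T hT)^[k] σ ∈ T ∧ σ <+: (grow T hT)^[k] σ ∧ σ.length + k ≤ ((grow T hT)^[k] σ).length := by
  induction k with
  | zero =>
    refine ⟨by simpa using h, List.prefix_refl σ, by simp⟩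
  | succ k ih =>
    obtain ⟨h1, h2, h3⟩ := ih
    obtain ⟨g1, g2, g3⟩ := grow_spec T hT h1
    rw [Function.iterate_succ_apply']
    exact ⟨g1, h2.trans g2, by omega⟩

/-- splitting extension of length `> L` -/
noncomputable def spL (σ : List ℕ) (L : ℕ) : List ℕ :=
  sp T hT ((grow T hT)^[L + 1] σ)

lemma spL_spec {σ : List ℕ} (h : σ ∈ T) (L : ℕ) :
    spL T hT σ L ∈ T ∧ σ <+: spL T hT σ L ∧ L < (spL T hT σ L).length ∧
      (menu T (spL T hT σ L)).Infinite := by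
  simp only [spL]
  obtain ⟨h1, h2, h3⟩ := iter_grow_spec T hT σ h (L + 1)
  obtain ⟨s1, s2, s3⟩ := sp_spec T hT h1
  exact ⟨s1, h2.trans s2, by have := s2.length_le; omega, s3⟩

/-! ### The recursive construction of the pair of branches -/

noncomputable def st : ℕ → List ℕ × List ℕ
  | 0 => (spL T hT [] 0, [])
  | i + 1 =>
    let Y := (st i).1
    let V := (st i).2
    let Z := spL T hT V Y.length
    let U := Y ++ [pick (menu T Y) (maxL Z)]
    let Y' := spL T hT U Z.length
    (Y', Z ++ [pick (menu T Z) (maxL Y')])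

noncomputable def Yy (i : ℕ) : List ℕ := (st T hT i).1
noncomputable def Vv (i : ℕ) : List ℕ := (st T hT i).2
noncomputable def Zz (i : ℕ) : List ℕ := spL T hT (Vv T hT i) (Yy T hT i).length
noncomputable def av (i : ℕ) : ℕ := pick (menu T (Yy T hT i)) (maxL (Zz T hT i))
noncomputable def Uu (i : ℕ) : List ℕ := Yy T hT i ++ [av T hT i]
noncomputable def bv (i : ℕ) : ℕ :=
  pick (menu T (Zz T hT i)) (maxL (spL T hT (Uu T hT i) (Zz T hT i).length))

lemma Yy_succ (i : ℕ) : Yy T hT (i + 1) = spL T hT (Uu T hT i) (Zz T hT i).length := rfl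

lemma Vv_succ (i : ℕ) : Vv T hT (i + 1) = Zz T hT i ++ [bv T hT i] := rfl

/-- invariant -/
lemma inv (i : ℕ) :
    Yy T hT i ∈ T ∧ (menu T (Yy T hT i)).Infinite ∧ Vv T hT i ∈ T := by
  induction i with
  | zero =>
    obtain ⟨h1, _, _, h4⟩ := spL_spec T hT (nil_mem T hT) 0
    exact ⟨h1, h4, nil_mem T hT⟩
  | succ i ih =>
    obtain ⟨hY, hYinf, hV⟩ := ih
    obtain ⟨hZ1, _, _, hZ4⟩ := spL_spec T hT hV (Yy T hT i).length
    have hU : Uu T hT i ∈ T := pick_mem hYinf _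
    obtain ⟨hY'1, _, _, hY'4⟩ := spL_spec T hT hU (Zz T hT i).length
    have hV' : Vv T hT (i + 1) ∈ T := by
      rw [Vv_succ]
      exact pick_mem hZ4 _
    rw [Yy_succ]
    exact ⟨hY'1, hY'4, hV'⟩

lemma Zz_mem (i : ℕ) : Zz T hT i ∈ T := (spL_spec T hT (inv T hT i).2.2 _).1
lemma Zz_inf (i : ℕ) : (menu T (Zz T hT i)).Infinite := (spL_spec T hT (inv T hT i).2.2 _).2.2.2
lemma Uu_mem (i : ℕ) : Uu T hT i ∈ T := pick_mem (inv T hT i).2.1 _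

lemma bv_gt (i : ℕ) :
    maxL (Yy T hT (i + 1)) < bv T hT i := by
  rw [Yy_succ]
  exact pick_gt (Zz_inf T hT i) _

/- lengths -/
lemma lenYZ (i : ℕ) : (Yy T hT i).length < (Zz T hT i).length :=
  (spL_spec T hT (inv T hT i).2.2 _).2.2.1

lemma lenZY (i : ℕ) : (Zz T hT i).length < (Yy T hT (i + 1)).length := by
  rw [Yy_succ]
  exact (spL_spec T hT (Uu_mem T hT i) _).2.2.1

lemma lenY0 : 0 < (Yy T hT 0).length := (spL_spec T hT (nil_mem T hT) 0).2.2.1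

lemma lenY (i : ℕ) : i < (Yy T hT i).length := by
  induction i with
  | zero => exact lenY0 T hT
  | succ i ih =>
    have h1 := lenYZ T hT i
    have h2 := lenZY T hT i
    omega

/- prefix chains -/
lemma prefYU (i : ℕ) : Yy T hT i <+: Uu T hT i := List.prefix_append _ _

lemma prefUY (i : ℕ) : Uu T hT i <+: Yy T hT (i + 1) := by
  rw [Yy_succ]
  exact (spL_spec T hT (Uu_mem T hT i) _).2.1

lemma prefVZ (i : ℕ) : Vv T hT i <+: Zz T hT i :=
  (spL_spec T hT (inv T hT i).2.2 _).2.1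

lemma prefZV (i : ℕ) : Zz T hT i <+: Vv T hT (i + 1) := by
  rw [Vv_succ]
  exact List.prefix_append _ _

lemma prefUU {i j : ℕ} (h : i ≤ j) : Uu T hT i <+: Uu T hT j := by
  induction j with
  | zero =>
    have : i = 0 := Nat.le_zero.mp h
    subst this; exact List.prefix_refl _
  | succ j ih =>
    rcases Nat.lt_or_ge i (j + 1) with h' | h'
    · exact (ih (Nat.lt_succ_iff.mp h')).trans ((prefUY T hT j).trans (prefYU T hT (j + 1)))
    · have : i = j + 1 := le_antisymm h h'
      subst this; exact List.prefix_refl _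

lemma prefVV {i j : ℕ} (h : i ≤ j) : Vv T hT i <+: Vv T hT j := by
  induction j with
  | zero =>
    have : i = 0 := Nat.le_zero.mp h
    subst this; exact List.prefix_refl _
  | succ j ih =>
    rcases Nat.lt_or_ge i (j + 1) with h' | h'
    · exact (ih (Nat.lt_succ_iff.mp h')).trans ((prefVZ T hT j).trans (prefZV T hT j))
    · have : i = j + 1 := le_antisymm h h'
      subst this; exact List.prefix_refl _

/- the two branches -/
noncomputable def ff (n : ℕ) : ℕ := (Uu T hT n).getD n 0
noncomputable def gg (n : ℕ) : ℕ := (Vv T hT (n + 1)).getD n 0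

lemma getD_of_prefix {l₁ l₂ : List ℕ} (h : l₁ <+: l₂) {j : ℕ} (hj : j < l₁.length) :
    l₁.getD j 0 = l₂.getD j 0 := by
  obtain ⟨t, rfl⟩ := h
  rw [List.getD_append _ _ _ _ hj]

lemma lenUu (n : ℕ) : n < (Uu T hT n).length := by
  have := lenY T hT n
  simp only [Uu, List.length_append, List.length_cons, List.length_nil]
  omega

lemma lenVv (n : ℕ) : n < (Vv T hT (n + 1)).length := by
  have h1 := lenY T hT n
  have h2 := lenYZ T hT n
  rw [Vv_succ]
  simp only [List.length_append, List.length_cons, List.length_nil]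
  omega

lemma ff_eq_U (i : ℕ) {j : ℕ} (hj : j < (Uu T hT i).length) :
    ff T hT j = (Uu T hT i).getD j 0 := by
  rcases le_total j i with h | h
  · exact getD_of_prefix (prefUU T hT h) (lenUu T hT j)
  · exact (getD_of_prefix (prefUU T hT h) hj).symm

lemma ff_eq_Y (i : ℕ) {j : ℕ} (hj : j < (Yy T hT i).length) :
    ff T hT j = (Yy T hT i).getD j 0 := by
  have h1 : j < (Uu T hT i).length := by
    have := (prefYU T hT i).length_le
    omega
  rw [ff_eq_U T hT i h1, getD_of_prefix (prefYU T hT i) hj]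

lemma gg_eq_V (i : ℕ) {j : ℕ} (hj : j < (Vv T hT i).length) :
    gg T hT j = (Vv T hT i).getD j 0 := by
  rcases le_total (j + 1) i with h | h
  · exact getD_of_prefix (prefVV T hT h) (lenVv T hT j)
  · exact (getD_of_prefix (prefVV T hT h) hj).symm

lemma gg_eq_Z (i : ℕ) {j : ℕ} (hj : j < (Zz T hT i).length) :
    gg T hT j = (Zz T hT i).getD j 0 := by
  have h1 : j < (Vv T hT (i + 1)).length := by
    have := (prefZV T hT i).length_le
    omega
  rw [gg_eq_V T hT (i + 1) h1, getD_of_prefix (prefZV T hT i) hj]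

lemma getD_concat (l : List ℕ) (a : ℕ) : (l ++ [a]).getD l.length 0 = a := by
  rw [List.getD_append_right _ _ _ _ (le_refl _)]
  simp

/- values at jump coordinates -/
lemma ff_at (i : ℕ) : ff T hT (Yy T hT i).length = av T hT i := by
  have hl : (Yy T hT i).length < (Uu T hT i).length := by
    simp only [Uu, List.length_append, List.length_cons, List.length_nil]
    omega
  rw [ff_eq_U T hT i hl]
  exact getD_concat _ _

lemma gg_at (i : ℕ) : gg T hT (Zz T hT i).length = bv T hT i := by
  have hl : (Zz T hT i).length < (Vv T hT (i + 1)).length := by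
    rw [Vv_succ]
    simp only [List.length_append, List.length_cons, List.length_nil]
    omega
  rw [gg_eq_V T hT (i + 1) hl]
  rw [Vv_succ]
  exact getD_concat _ _

/- bounds -/
lemma ff_lt (i : ℕ) {j : ℕ} (hj : j < (Yy T hT (i + 1)).length) :
    ff T hT j < bv T hT i := by
  have h1 : ff T hT j = (Yy T hT (i + 1)).getD j 0 := ff_eq_Y T hT (i + 1) hj
  have h2 : (Yy T hT (i + 1)).getD j 0 ∈ Yy T hT (i + 1) := by
    rw [List.getD_eq_getElem _ _ hj]
    exact List.getElem_mem _
  calc ff T hT j ≤ maxL (Yy T hT (i + 1)) := h1 ▸ le_maxL h2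
    _ < bv T hT i := bv_gt T hT i

lemma gg_lt (i : ℕ) {j : ℕ} (hj : j < (Zz T hT i).length) :
    gg T hT j < av T hT i := by
  have h1 : gg T hT j = (Zz T hT i).getD j 0 := gg_eq_Z T hT i hj
  have h2 : (Zz T hT i).getD j 0 ∈ Zz T hT i := by
    rw [List.getD_eq_getElem _ _ hj]
    exact List.getElem_mem _
  calc gg T hT j ≤ maxL (Zz T hT i) := h1 ▸ le_maxL h2
    _ < av T hT i := pick_gt (inv T hT i).2.1 _

/- branch membership -/
lemma ff_branch : ff T hT ∈ branches T := by
  intro n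
  have hlen : n ≤ (Uu T hT n).length := le_of_lt (lenUu T hT n)
  have : (List.range n).map (ff T hT) = (Uu T hT n).take n := by
    apply List.ext_getElem
    · simp [hlen]
    · intro j h1 h2
      simp only [List.getElem_map, List.getElem_range, List.getElem_take]
      have hj : j < n := by simpa using h1
      have hj' : j < (Uu T hT n).length := lt_of_lt_of_le hj hlen
      rw [← List.getD_eq_getElem _ 0 hj', ← ff_eq_U T hT n hj']
  rw [this]
  exact hT.2.1 _ (Uu_mem T hT n) _ (List.take_prefix _ _)

lemma gg_branch : gg T hT ∈ branches T := by
  intro n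
  have hlen : n ≤ (Vv T hT (n + 1)).length := le_of_lt (lenVv T hT n)
  have : (List.range n).map (gg T hT) = (Vv T hT (n + 1)).take n := by
    apply List.ext_getElem
    · simp [hlen]
    · intro j h1 h2
      simp only [List.getElem_map, List.getElem_range, List.getElem_take]
      have hj : j < n := by simpa using h1
      have hj' : j < (Vv T hT (n + 1)).length := lt_of_lt_of_le hj hlen
      rw [← List.getD_eq_getElem _ 0 hj', ← gg_eq_V T hT (n + 1) hj']
  rw [this]
  exact hT.2.1 _ (inv T hT (n + 1)).2.2 _ (List.take_prefix _ _)

/- eras cover all large n -/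
lemma cover (n : ℕ) (hn : (Yy T hT 0).length ≤ n) :
    ∃ i, ((Yy T hT i).length ≤ n ∧ n < (Zz T hT i).length) ∨
      ((Zz T hT i).length ≤ n ∧ n < (Yy T hT (i + 1)).length) := by
  induction n with
  | zero =>
    have := lenY0 T hT
    omega
  | succ n ih =>
    rcases Nat.lt_or_ge n ((Yy T hT 0).length) with h | h
    · exact ⟨0, Or.inl ⟨by omega, by have := lenYZ T hT 0; omega⟩⟩
    · obtain ⟨i, hi⟩ := ih h
      rcases hi with ⟨h1, h2⟩ | ⟨h1, h2⟩
      · rcases Nat.lt_or_ge (n + 1) ((Zz T hT i).length) with h3 | h3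
        · exact ⟨i, Or.inl ⟨by omega, h3⟩⟩
        · exact ⟨i, Or.inr ⟨by omega, by have := lenZY T hT i; omega⟩⟩
      · rcases Nat.lt_or_ge (n + 1) ((Yy T hT (i + 1)).length) with h3 | h3
        · exact ⟨i, Or.inr ⟨by omega, h3⟩⟩
        · refine ⟨i + 1, Or.inl ⟨by omega, ?_⟩⟩
          have := lenYZ T hT (i + 1)
          omega

lemma ff_ne_gg : ff T hT ≠ gg T hT := by
  intro h
  have h1 : ff T hT (Yy T hT 0).length = av T hT 0 := ff_at T hT 0
  have h2 : gg T hT (Yy T hT 0).length < av T hT 0 := gg_lt T hT 0 (lenYZ T hT 0)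
  rw [h] at h1
  omega

end Tree

end SPC


open SPMeager SPC in
/-- There is a meager set `M ⊆ ω^ω × ω^ω` such that every superperfect tree has two
distinct branches forming a pair in `M`. -/
theorem meager_set_meeting_every_superperfect_square :
    ∃ M : Set ((ℕ → ℕ) × (ℕ → ℕ)), IsMeagre M ∧
      ∀ T : Set (List ℕ), Superperfect T →
        ∃ f ∈ branches T, ∃ g ∈ branches T, f ≠ g ∧ (f, g) ∈ M := by
  refine ⟨⋃ N : ℕ, C N, isMeagre_M, ?_⟩
  intro T hT
  refine ⟨ff T hT, ff_branch T hT, gg T hT, gg_branch T hT, ff_ne_gg T hT, ?_⟩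
  rw [Set.mem_iUnion]
  refine ⟨(Yy T hT 0).length, ?_⟩
  intro n hn
  obtain ⟨i, hi⟩ := cover T hT n hn
  rcases hi with ⟨h1, h2⟩ | ⟨h1, h2⟩
  · -- `f`-era: `Mx f n ≥ a_i > Mx g n`
    have hf : av T hT i ≤ Mx (ff T hT) n := by
      have := le_Mx (ff T hT) h1
      rwa [ff_at T hT i] at this
    have hg : Mx (gg T hT) n < av T hT i :=
      Mx_lt _ fun j hj => gg_lt T hT i (lt_of_le_of_lt hj h2)
    show Mx (ff T hT) n ≠ Mx (gg T hT) n
    omega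
  · -- `g`-era: `Mx g n ≥ b_i > Mx f n`
    have hg : bv T hT i ≤ Mx (gg T hT) n := by
      have := le_Mx (gg T hT) h1
      rwa [gg_at T hT i] at this
    have hf : Mx (ff T hT) n < bv T hT i :=
      Mx_lt _ fun j hj => ff_lt T hT i (lt_of_le_of_lt hj h2)
    show Mx (ff T hT) n ≠ Mx (gg T hT) n
    omega
end

section
/- Every non-meager subset A of Baire space ω^ω with the Baire property contains the set of branches of a superperfect tree; that is, there is a superperfect tree T ⊆ ω^{<ω} with [T] ⊆ A. -/
open Filter Set Topology

/-! ### Cylinders -/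

/-- The basic open cylinder determined by a finite sequence. -/
def cylN (σ : List ℕ) : Set (ℕ → ℕ) := {x | (List.range σ.length).map x = σ}

lemma ix_length (x : ℕ → ℕ) (n : ℕ) : ((List.range n).map x).length = n := by simp

lemma ix_prefix (x : ℕ → ℕ) {n m : ℕ} (h : n ≤ m) :
    (List.range n).map x <+: (List.range m).map x := by
  rw [List.prefix_iff_eq_take, ix_length, ← List.map_take, List.take_range,
    Nat.min_eq_left h]

lemma cylN_nonempty (σ : List ℕ) : (cylN σ).Nonempty := by
  refine ⟨fun i => σ.getD i 0, ?_⟩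
  simp only [cylN, mem_setOf_eq]
  apply List.ext_getElem (by simp)
  intro i h1 h2
  simp [List.getD_eq_getElem?_getD, List.getElem?_eq_getElem h2]

lemma isOpen_cylN (σ : List ℕ) : IsOpen (cylN σ) := by
  have hset : cylN σ = ⋂ (i : Fin σ.length),
      (fun x : ℕ → ℕ => x i.1) ⁻¹' {σ[(i : ℕ)]} := by
    ext x
    simp only [cylN, mem_setOf_eq, mem_iInter, mem_preimage, mem_singleton_iff]
    constructor
    · intro h i
      have h2 : σ[(i : ℕ)] = ((List.range σ.length).map x)[(i : ℕ)]'(by simp) :=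
        List.getElem_of_eq h.symm _
      simp only [List.getElem_map, List.getElem_range] at h2
      exact h2.symm
    · intro h
      apply List.ext_getElem (by simp)
      intro i h1 h2
      simpa using h ⟨i, h2⟩
  rw [hset]
  exact isOpen_iInter_of_finite fun i =>
    (isOpen_discrete _).preimage (continuous_apply i.1)

lemma exists_cyl_subset {D : Set (ℕ → ℕ)} (hD : IsOpen D) {x : ℕ → ℕ} (hx : x ∈ D) (m : ℕ) :
    ∃ n, m ≤ n ∧ cylN ((List.range n).map x) ⊆ D := by
  rcases isOpen_pi_iff.mp hD x hx with ⟨I, u, hIu, hsub⟩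
  refine ⟨max m ((I.sup id) + 1), le_max_left _ _, ?_⟩
  intro y hy
  apply hsub
  rw [Set.mem_pi]
  intro i hi
  have hilt : i < max m ((I.sup id) + 1) := by
    have : i ≤ I.sup id := Finset.le_sup (f := id) hi
    omega
  have hyx : y i = x i := by
    simp only [cylN, mem_setOf_eq, ix_length] at hy
    have h2 : ((List.range (max m (I.sup id + 1))).map y)[i]'(by simpa using hilt)
        = ((List.range (max m (I.sup id + 1))).map x)[i]'(by simpa using hilt) :=
      List.getElem_of_eq hy _
    simpa using h2
  rw [hyx]
  exact (hIu i hi).2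

lemma exists_extension {D : Set (ℕ → ℕ)} (hDo : IsOpen D) (hDd : Dense D) (σ : List ℕ) :
    ∃ τ, σ <+: τ ∧ cylN τ ⊆ D := by
  obtain ⟨y, hyD, hyc⟩ := hDd.exists_mem_open (isOpen_cylN σ) (cylN_nonempty σ)
  obtain ⟨n, hn, hsub⟩ := exists_cyl_subset hDo hyD σ.length
  refine ⟨(List.range n).map y, ?_, hsub⟩
  have hyc' : σ = (List.range σ.length).map y := hyc.symm
  rw [hyc']
  exact ix_prefix y hn

/-! ### The recursive construction -/

/-- The fusion map: `hseq e r u` is the node of the superperfect tree indexed by the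
finite sequence `u` (read with `cons` as extension). -/
def hseq (e : List ℕ → List ℕ) (r : List ℕ) : List ℕ → List ℕ
  | [] => r
  | a :: u => e (hseq e r u ++ [a])

section Comb

variable {e : List ℕ → List ℕ}

lemma hseq_cons' (he : ∀ τ, τ <+: e τ) (r : List ℕ) (a : ℕ) (u : List ℕ) :
    hseq e r u ++ [a] <+: hseq e r (a :: u) := he _

lemma hseq_cons (he : ∀ τ, τ <+: e τ) (r : List ℕ) (a : ℕ) (u : List ℕ) :
    hseq e r u <+: hseq e r (a :: u) :=
  (List.prefix_append _ _).trans (hseq_cons' he r a u)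

lemma hseq_suffix_mono (he : ∀ τ, τ <+: e τ) (r : List ℕ) {u v : List ℕ} (h : u <:+ v) :
    hseq e r u <+: hseq e r v := by
  obtain ⟨t, rfl⟩ := h
  induction t with
  | nil => exact List.prefix_refl _
  | cons c t ih => exact ih.trans (hseq_cons he r c (t ++ u))

lemma hseq_nil_prefix (he : ∀ τ, τ <+: e τ) (r : List ℕ) (u : List ℕ) :
    hseq e r [] <+: hseq e r u :=
  hseq_suffix_mono he r ⟨u, by simp⟩

lemma hseq_length (he : ∀ τ, τ <+: e τ) (r : List ℕ) (u : List ℕ) :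
    u.length ≤ (hseq e r u).length := by
  induction u with
  | nil => simp
  | cons a u ih =>
    have := (hseq_cons' he r a u).length_le
    simp only [List.length_append, List.length_cons, List.length_nil] at this ⊢
    omega

/-- The key structural lemma: if `hseq u ++ [a]` is a prefix of `hseq w`,
then so is `hseq (a :: u)`. -/
lemma hseq_step (he : ∀ τ, τ <+: e τ) (r : List ℕ) : ∀ w u a, hseq e r u ++ [a] <+: hseq e r w →
    hseq e r (a :: u) <+: hseq e r w := by
  intro w
  induction w with
  | nil =>
    intro u a hp
    exfalso
    have h1 := (hseq_nil_prefix he r u).length_le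
    have h2 := hp.length_le
    simp only [List.length_append, List.length_cons, List.length_nil] at h1 h2
    omega
  | cons b w' ih =>
    have hw'p : hseq e r w' <+: hseq e r (b :: w') := hseq_cons he r b w'
    have key : ∀ u, hseq e r u <+: hseq e r (b :: w') →
        (hseq e r u).length ≤ (hseq e r w').length ∨ hseq e r u = hseq e r (b :: w') := by
      intro u
      induction u with
      | nil => intro _; exact Or.inl (hseq_nil_prefix he r w').length_le
      | cons c u'' ihu =>
        intro hu
        by_cases hlen : (hseq e r (c :: u'')).length ≤ (hseq e r w').length
        · exact Or.inl hlen
        right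
        push_neg at hlen
        have hwb : hseq e r w' ++ [b] <+: hseq e r (b :: w') := hseq_cons' he r b w'
        have h2 : hseq e r u'' ++ [c] <+: hseq e r (b :: w') :=
          (hseq_cons' he r c u'').trans hu
        rcases lt_trichotomy (hseq e r u'' ++ [c]).length (hseq e r w' ++ [b]).length
          with h | h | h
        · exfalso
          have hpw : hseq e r u'' ++ [c] <+: hseq e r w' :=
            List.prefix_of_prefix_length_le h2 hw'p
              (by simp only [List.length_append, List.length_cons, List.length_nil] at h ⊢
                  omega)
          have hle2 := (ih u'' c hpw).length_le
          omega
        · have heq : hseq e r u'' ++ [c] = hseq e r w' ++ [b] :=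
            (List.prefix_of_prefix_length_le h2 hwb (le_of_eq h)).eq_of_length h
          show e (hseq e r u'' ++ [c]) = e (hseq e r w' ++ [b])
          rw [heq]
        · exfalso
          have hu'' : hseq e r u'' <+: hseq e r (b :: w') :=
            ((List.prefix_append _ _).trans (hseq_cons' he r c u'')).trans hu
          have hlt : (hseq e r u'').length < (hseq e r (c :: u'')).length := by
            have := (hseq_cons' he r c u'').length_le
            simp only [List.length_append, List.length_cons, List.length_nil] at this
            omega
          rcases ihu hu'' with hle | heq2
          · simp only [List.length_append, List.length_cons, List.length_nil] at h
            omega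
          · have hl2 := hu.length_le
            rw [← heq2] at hl2
            omega
    intro u a hp
    by_cases hl : (hseq e r u ++ [a]).length ≤ (hseq e r w').length
    · exact (ih u a (List.prefix_of_prefix_length_le hp hw'p hl)).trans hw'p
    · push_neg at hl
      have hu : hseq e r u <+: hseq e r (b :: w') := (List.prefix_append _ _).trans hp
      rcases key u hu with hle | heq
      · have hlen_eq : (hseq e r u).length = (hseq e r w').length := by
          simp only [List.length_append, List.length_cons, List.length_nil] at hl
          omega
        have heq2 : hseq e r u ++ [a] = hseq e r w' ++ [b] :=
          (List.prefix_of_prefix_length_le hp (hseq_cons' he r b w')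
            (by simp [hlen_eq])).eq_of_length (by simp [hlen_eq])
        show e (hseq e r u ++ [a]) <+: e (hseq e r w' ++ [b])
        rw [heq2]
      · exfalso
        have hl2 := hp.length_le
        rw [← heq] at hl2
        simp only [List.length_append, List.length_cons, List.length_nil] at hl2
        omega

end Comb

/-! ### Main theorem -/

/-- Every non-meager subset of Baire space with the Baire property contains the branches
of a superperfect tree. -/
theorem nonmeager_baire_set_contains_superperfect
    (A : Set (ℕ → ℕ)) (hA : BaireMeasurableSet A) (hnm : ¬ IsMeagre A) :
    ∃ T : Set (List ℕ), Superperfect T ∧ branches T ⊆ A := by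
  obtain ⟨U, hUo, hUeq⟩ := hA.residualEq_isOpen
  have hC : {y : ℕ → ℕ | y ∈ A ↔ y ∈ U} ∈ residual (ℕ → ℕ) := eventuallyEq_set.mp hUeq
  -- U is nonempty
  have hUne : U.Nonempty := by
    rcases U.eq_empty_or_nonempty with h | h
    · exfalso
      apply hnm
      have hsub : A ⊆ {y : ℕ → ℕ | y ∈ A ↔ y ∈ U}ᶜ := by
        intro y hy hmem
        rw [h] at hmem
        exact (hmem.mp hy)
      have hmg : IsMeagre ({y : ℕ → ℕ | y ∈ A ↔ y ∈ U}ᶜ) := by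
        rw [IsMeagre, compl_compl]; exact hC
      exact hmg.mono hsub
    · exact h
  -- a countable family of dense open sets
  obtain ⟨S, hSo, hSd, hSc, hSsub⟩ := mem_residual_iff.mp hC
  have hD : ∃ D : ℕ → Set (ℕ → ℕ), (∀ i, IsOpen (D i)) ∧ (∀ i, Dense (D i)) ∧
      (⋂ i, D i) ⊆ {y : ℕ → ℕ | y ∈ A ↔ y ∈ U} := by
    rcases S.eq_empty_or_nonempty with h | h
    · refine ⟨fun _ => univ, fun _ => isOpen_univ, fun _ => dense_univ, ?_⟩
      subst h
      simpa using hSsub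
    · obtain ⟨f, hf⟩ := hSc.exists_eq_range h
      refine ⟨f, fun i => hSo _ (hf ▸ mem_range_self i),
        fun i => hSd _ (hf ▸ mem_range_self i), ?_⟩
      intro y hy
      apply hSsub
      intro t ht
      rw [hf] at ht
      obtain ⟨i, rfl⟩ := ht
      exact mem_iInter.mp hy i
  obtain ⟨D, hDo, hDd, hDsub⟩ := hD
  -- finite intersections of the D's
  set E : ℕ → Set (ℕ → ℕ) := fun k => Nat.rec (D 0) (fun n s => s ∩ D (n + 1)) k with hE
  have hEo : ∀ k, IsOpen (E k) := by
    intro k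
    induction k with
    | zero => exact hDo 0
    | succ n ihn => exact ihn.inter (hDo (n + 1))
  have hEd : ∀ k, Dense (E k) := by
    intro k
    induction k with
    | zero => exact hDd 0
    | succ n ihn => exact Dense.inter_of_isOpen_left ihn (hDd (n + 1)) (hEo n)
  have hED : ∀ i k, i ≤ k → E k ⊆ D i := by
    intro i k
    induction k with
    | zero => intro hik; interval_cases i; exact subset_rfl
    | succ n ihn =>
      intro hik
      rcases Nat.lt_or_ge i (n + 1) with h | h
      · exact (inter_subset_left).trans (ihn (by omega))
      · have hi : i = n + 1 := by omega
        subst hi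
        exact inter_subset_right
  -- the extension function
  have hext : ∀ τ : List ℕ, ∃ τ', τ <+: τ' ∧ cylN τ' ⊆ E τ.length :=
    fun τ => exists_extension (hEo _) (hEd _) τ
  choose e he he₂ using hext
  -- the root
  obtain ⟨x₀, hx₀⟩ := hUne
  obtain ⟨n₀, -, hcyl₀⟩ := exists_cyl_subset hUo hx₀ 0
  set r : List ℕ := (List.range n₀).map x₀ with hr
  have hrU : cylN r ⊆ U := hcyl₀
  -- the tree
  refine ⟨{σ | ∃ u, σ <+: hseq e r u}, ⟨⟨[], ⟨[], List.nil_prefix⟩⟩, ?_, ?_⟩, ?_⟩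
  · rintro σ ⟨u, hσ⟩ τ hτ
    exact ⟨u, hτ.trans hσ⟩
  · rintro σ ⟨u, hσ⟩
    refine ⟨hseq e r u, ⟨u, List.prefix_refl _⟩, hσ, ?_⟩
    exact Set.infinite_of_injective_forall_mem (f := fun n : ℕ => n)
      Function.injective_id (fun n => ⟨n :: u, hseq_cons' he r n u⟩)
  · -- branches are inside A
    intro x hx
    simp only [branches, mem_setOf_eq] at hx
    have hPx_prefix : ∀ {σ τ : List ℕ}, σ <+: τ →
        τ = (List.range τ.length).map x → σ = (List.range σ.length).map x := by
      intro σ τ hστ hτ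
      have hle : σ.length ≤ τ.length := hστ.length_le
      have h2 : σ <+: (List.range τ.length).map x := by rw [← hτ]; exact hστ
      have h3 := List.prefix_iff_eq_take.mp h2
      conv_lhs => rw [h3]
      rw [← List.map_take, List.take_range, Nat.min_eq_left hle]
    -- main claim: arbitrarily deep nodes are initial segments of x
    have hR : ∀ k : ℕ, ∃ u : List ℕ, k ≤ u.length ∧
        hseq e r u = (List.range (hseq e r u).length).map x := by
      intro k
      induction k with
      | zero =>
        obtain ⟨u₀, hp⟩ := hx (hseq e r []).length
        refine ⟨[], by simp, ?_⟩
        have h0 : hseq e r [] <+: hseq e r u₀ := hseq_nil_prefix he r u₀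
        have := (List.prefix_of_prefix_length_le h0 hp (by simp)).eq_of_length (by simp)
        simpa using this
      | succ k ihk =>
        obtain ⟨u, hk, hPx⟩ := ihk
        obtain ⟨w, hw⟩ := hx ((hseq e r u).length + 1)
        have hxa : (List.range ((hseq e r u).length + 1)).map x
            = hseq e r u ++ [x (hseq e r u).length] := by
          rw [List.range_succ, List.map_append, ← hPx]
          simp
        rw [hxa] at hw
        have hstep := hseq_step he r w u (x (hseq e r u).length) hw
        obtain ⟨w₂, hw₂⟩ := hx (hseq e r (x (hseq e r u).length :: u)).length
        have hmM : (hseq e r u).length + 1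
            ≤ (hseq e r (x (hseq e r u).length :: u)).length := by
          have := (hseq_cons' he r (x (hseq e r u).length) u).length_le
          simp only [List.length_append, List.length_cons, List.length_nil] at this
          omega
        have hw₂' : hseq e r u ++ [x (hseq e r u).length] <+: hseq e r w₂ := by
          rw [← hxa]
          exact (ix_prefix x hmM).trans hw₂
        have hstep₂ := hseq_step he r w₂ u (x (hseq e r u).length) hw₂'
        refine ⟨x (hseq e r u).length :: u, by simp; omega, ?_⟩
        exact (List.prefix_of_prefix_length_le hstep₂ hw₂
          (by rw [ix_length])).eq_of_length (by rw [ix_length])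
    -- x belongs to every cylinder along the branch, hence to U and every D i
    have hxU : x ∈ U := by
      apply hrU
      obtain ⟨u, -, hPx⟩ := hR 0
      have hroot : r = (List.range r.length).map x :=
        hPx_prefix (hseq_nil_prefix he r u) hPx
      exact hroot.symm
    have hxD : ∀ i, x ∈ D i := by
      intro i
      obtain ⟨u, hlen, hPx⟩ := hR (i + 1)
      obtain ⟨a, u', rfl⟩ : ∃ a u', u = a :: u' := by
        cases u with
        | nil => simp at hlen
        | cons a u' => exact ⟨a, u', rfl⟩
      have hxcyl : x ∈ cylN (hseq e r (a :: u')) := hPx.symm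
      have hsub2 : cylN (hseq e r (a :: u')) ⊆ E (hseq e r u' ++ [a]).length := he₂ _
      apply hED i _ _ (hsub2 hxcyl)
      have hlu := hseq_length he r u'
      simp only [List.length_append, List.length_cons, List.length_nil] at hlen ⊢
      omega
    exact (hDsub (mem_iInter.mpr hxD)).mpr hxU
end

section
/- Let n ≥ 1 and let S ⊆ (2^ω)^n be a null set with respect to the n-fold product of the coin-flipping measure. Then there exists a sequence ⟨J_m ; m ∈ ℕ⟩ with J_m ⊆ (2^m)^n (i.e., J_m a set of n-tuples of binary strings of length m) such that ∑_m |J_m| / (2^m)^n < ∞ and S ⊆ { x ∈ (2^ω)^n : there are infinitely many m with (x_0↾m, …, x_{n−1}↾m) ∈ J_m }. -/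
open MeasureTheory

/-- `μ` is the coin-flipping (fair Bernoulli product) measure on Cantor space `ℕ → Bool`:
every basic clopen set determined by a finite binary string `s` has measure `2^(-|s|)`. -/
def IsCoinMeasure (μ : Measure (ℕ → Bool)) : Prop :=
  ∀ s : List Bool,
    μ {x : ℕ → Bool | ∀ i : Fin s.length, x i = s.get i} = (1 / 2 : ENNReal) ^ s.length

/-!
By outer regularity choose open sets `U k ⊇ S` with `μⁿ (U k) < 2⁻ᵏ`. Each point of an open set
`U` has a least depth `m` at which its prefix cylinder lies in `U`; cylinders of least depth are
pairwise disjoint, so `∑ₘ 2^(-mn) · #(least-depth prefixes of U at depth m) ≤ μⁿ U`. Taking for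
`J m` the union over `k` of these prefixes makes the series summable, and a point of `S` has, for
every `k`, a least-depth cylinder `C ⊆ U k` of some depth `m`, with `2^(-mn) = μⁿ C < 2⁻ᵏ`; so
these depths are unbounded.
-/

open Set Filter Topology Function
open scoped ENNReal

namespace IsCoinMeasure

variable {μ : Measure (ℕ → Bool)}

theorem measure_prefix_eq (hμ : IsCoinMeasure μ) {m : ℕ} (t : Fin m → Bool) :
    μ {y | ∀ j : Fin m, y j = t j} = (1 / 2) ^ m := by
  convert hμ (List.ofFn t) using 3 <;> simp only [List.length_ofFn, List.get_ofFn]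
  ext y
  exact ⟨fun hy i => hy (Fin.cast List.length_ofFn i),
    fun hy j => hy (Fin.cast List.length_ofFn.symm j)⟩

theorem isProbabilityMeasure (hμ : IsCoinMeasure μ) : IsProbabilityMeasure μ :=
  ⟨by simpa using hμ []⟩

end IsCoinMeasure

theorem PiNat.eventually_cylinder_subset_s14 {y : ℕ → Bool} {V : Set (ℕ → Bool)} (hV : V ∈ 𝓝 y) :
    ∀ᶠ m in atTop, PiNat.cylinder y m ⊆ V := by
  obtain ⟨_, ⟨z, m, rfl⟩, hy, hzV⟩ := (PiNat.isTopologicalBasis_cylinders _).mem_nhds_iff.1 hV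
  rw [← PiNat.mem_cylinder_iff_eq.1 hy] at hzV
  exact eventually_atTop.2 ⟨m, fun k hk => (PiNat.cylinder_anti y hk).trans hzV⟩

theorem summable_div_two_pow_of_tsum_ne_top {n : ℕ} {c : ℕ → ℕ}
    (h : ∑' m, (1 / 2 : ℝ≥0∞) ^ (m * n) * c m ≠ ⊤) :
    Summable fun m => (c m : ℝ) / ((2 : ℝ) ^ m) ^ n := by
  refine (ENNReal.summable_toReal h).congr fun m => ?_
  simp [pow_mul, div_eq_inv_mul]

namespace CantorTuple

variable {n : ℕ}

/-- `truncate m x` is the tuple `(x₀↾m, …, x_{n-1}↾m)`. -/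
def truncate (m : ℕ) (x : Fin n → ℕ → Bool) : Fin n → Fin m → Bool := fun i j => x i j

def prefixCylinder (m : ℕ) (x : Fin n → ℕ → Bool) : Set (Fin n → ℕ → Bool) :=
  truncate m ⁻¹' {truncate m x}

theorem mem_prefixCylinder_self (m : ℕ) (x : Fin n → ℕ → Bool) : x ∈ prefixCylinder m x := rfl

theorem mem_prefixCylinder_iff {m : ℕ} {x y : Fin n → ℕ → Bool} :
    y ∈ prefixCylinder m x ↔ ∀ i, y i ∈ PiNat.cylinder (x i) m := by
  simp [prefixCylinder, truncate, funext_iff, PiNat.mem_cylinder_iff, Fin.forall_iff]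

theorem truncate_eq_of_le {m' m : ℕ} (h : m' ≤ m) {x y : Fin n → ℕ → Bool}
    (hxy : truncate m x = truncate m y) : truncate m' x = truncate m' y :=
  funext fun i => funext fun j => congrFun (congrFun hxy i) (Fin.castLE h j)

theorem prefixCylinder_eq_of_mem {m' m : ℕ} (h : m' ≤ m) {x y : Fin n → ℕ → Bool}
    (hy : y ∈ prefixCylinder m x) : prefixCylinder m' y = prefixCylinder m' x := by
  simp only [prefixCylinder, truncate_eq_of_le h hy]

theorem measurable_truncate (m : ℕ) : Measurable (truncate (n := n) m) := by
  unfold truncate; fun_prop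

theorem eventually_prefixCylinder_subset {x : Fin n → ℕ → Bool} {U : Set (Fin n → ℕ → Bool)}
    (hU : U ∈ 𝓝 x) : ∀ᶠ m in atTop, prefixCylinder m x ⊆ U := by
  rw [nhds_pi] at hU
  obtain ⟨I, t, ht, hIU⟩ := Filter.mem_pi'.1 hU
  filter_upwards [eventually_all.2 fun i => PiNat.eventually_cylinder_subset_s14 (ht i)] with m hm
  exact fun y hy => hIU fun i _ => hm i (mem_prefixCylinder_iff.1 hy i)

variable {μ : Measure (ℕ → Bool)}

theorem pi_truncate_preimage_singleton (hμ : IsCoinMeasure μ) {m : ℕ} (s : Fin n → Fin m → Bool) :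
    Measure.pi (fun _ : Fin n => μ) (truncate m ⁻¹' {s}) = (1 / 2) ^ (m * n) := by
  have hpi : truncate m ⁻¹' {s} = univ.pi fun i => {y : ℕ → Bool | ∀ j : Fin m, y j = s i j} := by
    ext x; simp [truncate, funext_iff]
  have := hμ.isProbabilityMeasure
  rw [hpi, Measure.pi_pi]
  simp [hμ.measure_prefix_eq, pow_mul]

theorem map_pi_truncate (hμ : IsCoinMeasure μ) (m : ℕ) :
    (Measure.pi fun _ : Fin n => μ).map (truncate m) =
      (1 / 2 : ℝ≥0∞) ^ (m * n) • Measure.count := by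
  refine Measure.ext_iff_singleton.2 fun s => ?_
  rw [Measure.map_apply (measurable_truncate m) (measurableSet_singleton s),
    pi_truncate_preimage_singleton hμ]
  simp

theorem pi_truncate_preimage (hμ : IsCoinMeasure μ) {m : ℕ} (A : Set (Fin n → Fin m → Bool)) :
    Measure.pi (fun _ : Fin n => μ) (truncate m ⁻¹' A) = (1 / 2) ^ (m * n) * Measure.count A := by
  rw [← Measure.map_apply (measurable_truncate m) A.toFinite.measurableSet, map_pi_truncate hμ]
  exact Measure.smul_apply _ _ _

def entrySet (U : Set (Fin n → ℕ → Bool)) (m : ℕ) : Set (Fin n → ℕ → Bool) :=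
  {x | prefixCylinder m x ⊆ U ∧ ∀ m' < m, ¬ prefixCylinder m' x ⊆ U}

variable {U : Set (Fin n → ℕ → Bool)}

theorem pairwise_disjoint_entrySet (U : Set (Fin n → ℕ → Bool)) :
    Pairwise (Disjoint on entrySet U) := by
  intro m m' hne
  refine Set.disjoint_left.2 fun x hx hx' => ?_
  rcases hne.lt_or_gt with h | h
  · exact hx'.2 m h hx.1
  · exact hx.2 m' h hx'.1

theorem iUnion_entrySet (hU : IsOpen U) : ⋃ m, entrySet U m = U := by
  classical
  refine Set.Subset.antisymm (Set.iUnion_subset fun m x hx => hx.1 (mem_prefixCylinder_self m x))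
    fun x hx => ?_
  have hex : ∃ m, prefixCylinder m x ⊆ U :=
    (eventually_prefixCylinder_subset (hU.mem_nhds hx)).exists
  exact Set.mem_iUnion.2 ⟨Nat.find hex, Nat.find_spec hex, fun m' h => Nat.find_min hex h⟩

theorem truncate_preimage_image_entrySet (U : Set (Fin n → ℕ → Bool)) (m : ℕ) :
    truncate m ⁻¹' (truncate m '' entrySet U m) = entrySet U m := by
  refine Set.Subset.antisymm ?_ (Set.subset_preimage_image _ _)
  rintro y ⟨x, hx, hxy⟩
  have hcyl : ∀ m' ≤ m, prefixCylinder m' y = prefixCylinder m' x :=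
    fun m' h => prefixCylinder_eq_of_mem h hxy.symm
  exact ⟨hcyl m le_rfl ▸ hx.1, fun m' h => hcyl m' h.le ▸ hx.2 m' h⟩

theorem measurableSet_entrySet (U : Set (Fin n → ℕ → Bool)) (m : ℕ) :
    MeasurableSet (entrySet U m) :=
  truncate_preimage_image_entrySet U m ▸
    measurable_truncate m (Set.toFinite _).measurableSet

theorem tsum_count_image_entrySet_le (hμ : IsCoinMeasure μ) (U : Set (Fin n → ℕ → Bool)) :
    ∑' m, (1 / 2 : ℝ≥0∞) ^ (m * n) * Measure.count (truncate m '' entrySet U m)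
      ≤ Measure.pi (fun _ : Fin n => μ) U :=
  calc ∑' m, (1 / 2 : ℝ≥0∞) ^ (m * n) * Measure.count (truncate m '' entrySet U m)
      = ∑' m, Measure.pi (fun _ : Fin n => μ) (entrySet U m) := by
        simp only [← pi_truncate_preimage hμ, truncate_preimage_image_entrySet]
    _ = Measure.pi (fun _ : Fin n => μ) (⋃ m, entrySet U m) :=
        (measure_iUnion (pairwise_disjoint_entrySet U) (measurableSet_entrySet U)).symm
    _ ≤ Measure.pi (fun _ : Fin n => μ) U :=
        measure_mono (Set.iUnion_subset fun m x hx => hx.1 (mem_prefixCylinder_self m x))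

def coverPrefixes (U : ℕ → Set (Fin n → ℕ → Bool)) (m : ℕ) : Set (Fin n → Fin m → Bool) :=
  ⋃ k, truncate m '' entrySet (U k) m

theorem tsum_count_coverPrefixes_le (hμ : IsCoinMeasure μ) (U : ℕ → Set (Fin n → ℕ → Bool)) :
    ∑' m, (1 / 2 : ℝ≥0∞) ^ (m * n) * Measure.count (coverPrefixes U m)
      ≤ ∑' k, Measure.pi (fun _ : Fin n => μ) (U k) :=
  calc ∑' m, (1 / 2 : ℝ≥0∞) ^ (m * n) * Measure.count (coverPrefixes U m)
      ≤ ∑' m, ∑' k, (1 / 2 : ℝ≥0∞) ^ (m * n) * Measure.count (truncate m '' entrySet (U k) m) :=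
        ENNReal.tsum_le_tsum fun m =>
          ENNReal.tsum_mul_left.symm ▸ by gcongr; exact measure_iUnion_le _
    _ = ∑' k, ∑' m, (1 / 2 : ℝ≥0∞) ^ (m * n) * Measure.count (truncate m '' entrySet (U k) m) :=
        ENNReal.tsum_comm
    _ ≤ ∑' k, Measure.pi (fun _ : Fin n => μ) (U k) :=
        ENNReal.tsum_le_tsum fun k => tsum_count_image_entrySet_le hμ (U k)

theorem infinite_setOf_truncate_mem_coverPrefixes (hμ : IsCoinMeasure μ)
    {U : ℕ → Set (Fin n → ℕ → Bool)} (hUo : ∀ k, IsOpen (U k))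
    (hUm : ∀ k, Measure.pi (fun _ : Fin n => μ) (U k) < (1 / 2) ^ k)
    {x : Fin n → ℕ → Bool} (hx : ∀ k, x ∈ U k) :
    {m | truncate m x ∈ coverPrefixes U m}.Infinite := by
  refine Set.infinite_of_forall_exists_gt fun a => ?_
  -- In `U (a * n)` the least-depth cylinder around `x` has a depth `m` with `2^(-mn) < 2^(-an)`.
  obtain ⟨m, hm⟩ := Set.mem_iUnion.1 ((iUnion_entrySet (hUo (a * n))).symm ▸ hx (a * n))
  refine ⟨m, Set.mem_iUnion.2 ⟨a * n, x, hm, rfl⟩, ?_⟩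
  have hlt : (1 / 2 : ℝ≥0∞) ^ (m * n) < (1 / 2) ^ (a * n) :=
    calc (1 / 2 : ℝ≥0∞) ^ (m * n) = Measure.pi (fun _ : Fin n => μ) (prefixCylinder m x) :=
          (pi_truncate_preimage_singleton hμ _).symm
      _ ≤ Measure.pi (fun _ : Fin n => μ) (U (a * n)) := measure_mono hm.1
      _ < _ := hUm _
  by_contra! hma
  exact hlt.not_ge (pow_le_pow_of_le_one zero_le ENNReal.half_le_self
    (Nat.mul_le_mul_right n hma))

theorem summable_card_toFinset_coverPrefixes (hμ : IsCoinMeasure μ)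
    {U : ℕ → Set (Fin n → ℕ → Bool)} [∀ m, Fintype (coverPrefixes U m)]
    (hUm : ∀ k, Measure.pi (fun _ : Fin n => μ) (U k) < (1 / 2) ^ k) :
    Summable fun m => ((coverPrefixes U m).toFinset.card : ℝ) / ((2 : ℝ) ^ m) ^ n := by
  have hcard (m : ℕ) : Measure.count (coverPrefixes U m) = (coverPrefixes U m).toFinset.card := by
    rw [← Measure.count_apply_finset, Set.coe_toFinset]
  have hgeom : ∑' k, Measure.pi (fun _ : Fin n => μ) (U k) ≠ ⊤ :=
    ne_top_of_le_ne_top (by simp) (ENNReal.tsum_le_tsum fun k => (hUm k).le)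
  refine summable_div_two_pow_of_tsum_ne_top ?_
  simpa only [hcard] using ne_top_of_le_ne_top hgeom (tsum_count_coverPrefixes_le hμ U)

end CantorTuple

theorem null_set_covered_by_small_cylinders_general
    (n : ℕ)
    (μ : Measure (ℕ → Bool)) (hμ : IsCoinMeasure μ)
    (S : Set (Fin n → (ℕ → Bool)))
    (hS : Measure.pi (fun _ : Fin n => μ) S = 0) :
    ∃ J : (m : ℕ) → Finset (Fin n → (Fin m → Bool)),
      Summable (fun m : ℕ => ((J m).card : ℝ) / ((2 : ℝ) ^ m) ^ n) ∧
      S ⊆ {x : Fin n → (ℕ → Bool) |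
        {m : ℕ | (fun (i : Fin n) (j : Fin m) => x i j) ∈ J m}.Infinite} := by
  classical
  have := hμ.isProbabilityMeasure
  have hopen (k : ℕ) : ∃ U, S ⊆ U ∧ IsOpen U ∧
      Measure.pi (fun _ : Fin n => μ) U < (1 / 2) ^ k :=
    Set.exists_isOpen_lt_of_lt S _ (hS ▸ ENNReal.pow_pos (by norm_num) k)
  choose U hSU hUo hUm using hopen
  refine ⟨fun m => (CantorTuple.coverPrefixes U m).toFinset,
    CantorTuple.summable_card_toFinset_coverPrefixes hμ hUm, fun x hx => ?_⟩
  simp only [Set.mem_ofPred_eq, Set.mem_toFinset]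
  exact CantorTuple.infinite_setOf_truncate_mem_coverPrefixes hμ hUo hUm fun k => hSU k hx

/-- Every null set `S ⊆ (2^ω)^n` is covered by a "small" sequence of sets of `n`-tuples of
binary strings: there are `J m ⊆ (2^m)^n` with `∑_m |J m|/(2^m)^n < ∞` such that every
element of `S` has infinitely many of its restrictions in the corresponding `J m`. -/
theorem null_set_covered_by_small_cylinders
    (n : ℕ) (hn : 1 ≤ n)
    (μ : Measure (ℕ → Bool)) (hμ : IsCoinMeasure μ)
    (S : Set (Fin n → (ℕ → Bool)))
    (hS : Measure.pi (fun _ : Fin n => μ) S = 0) :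
    ∃ J : (m : ℕ) → Finset (Fin n → (Fin m → Bool)),
      Summable (fun m : ℕ => ((J m).card : ℝ) / ((2 : ℝ) ^ m) ^ n) ∧
      S ⊆ {x : Fin n → (ℕ → Bool) |
        {m : ℕ | (fun (i : Fin n) (j : Fin m) => x i j) ∈ J m}.Infinite} :=
  null_set_covered_by_small_cylinders_general n μ hμ S hS
end

section
/- Let x ∈ 2^ω be such that x(n) = 1 for infinitely many n. Then the set S_x = { y ∈ 2^ω : for all n, y(n + ∑_{i<n} x(i)) = x(n) } is a nonempty perfect subset of Cantor space. -/
/-- If `x ∈ 2^ω` takes the value `1` infinitely often, then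
`S_x = { y : ∀ n, y (n + ∑_{i<n} x i) = x n }` is a nonempty perfect subset of Cantor
space. -/
theorem encoding_set_is_perfect
    (x : ℕ → Bool) (hx : {n : ℕ | x n = true}.Infinite) :
    ({y : ℕ → Bool | ∀ n : ℕ,
        y (n + ∑ i ∈ Finset.range n, (x i).toNat) = x n} : Set (ℕ → Bool)).Nonempty ∧
    Perfect {y : ℕ → Bool | ∀ n : ℕ,
        y (n + ∑ i ∈ Finset.range n, (x i).toNat) = x n} := by
  set f : ℕ → ℕ := fun n => n + ∑ i ∈ Finset.range n, (x i).toNat with hf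
  have hmono : StrictMono f := by
    apply strictMono_nat_of_lt_succ
    intro n
    simp only [hf, Finset.sum_range_succ]
    omega
  have hinj := hmono.injective
  have hfn : ∀ n, n ≤ f n := fun n => Nat.le_add_right _ _
  refine ⟨⟨fun m => x (Function.invFun f m), fun n => by
      simpa using congrArg x (Function.leftInverse_invFun hinj n)⟩, ?_, ?_⟩
  · have : {y : ℕ → Bool | ∀ n : ℕ, y (f n) = x n}
        = ⋂ n, (fun y : ℕ → Bool => y (f n)) ⁻¹' {x n} := by
      ext y; simp [Set.mem_iInter]
    rw [this]
    exact isClosed_iInter fun n => (isClosed_singleton).preimage (continuous_apply _)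
  · intro y hy
    rw [accPt_iff_nhds]
    intro U hU
    rw [nhds_pi] at hU
    obtain ⟨I, V, hV, hsub⟩ := Filter.mem_pi'.mp hU
    obtain ⟨k, hk1, hk2⟩ := hx.exists_gt (I.sup id)
    simp only [Set.mem_setOf_eq] at hk1
    set m := f k + 1 with hm
    have hmI : ∀ i ∈ I, i < m := by
      intro i hi
      have : i ≤ I.sup id := Finset.le_sup (f := id) hi
      have := hfn k
      omega
    have hfk1 : f (k + 1) = f k + 2 := by
      simp [hf, Finset.sum_range_succ, hk1]; omega
    have hmf : ∀ n, f n ≠ m := by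
      intro n
      rcases le_or_gt n k with h | h
      · have := hmono.le_iff_le.mpr h
        omega
      · have : f (k + 1) ≤ f n := hmono.le_iff_le.mpr h
        omega
    refine ⟨Function.update y m (!(y m)), ⟨?_, ?_⟩, ?_⟩
    · apply hsub
      intro i hi
      rw [Function.update_of_ne (by exact fun h => absurd (h ▸ hmI i hi) (lt_irrefl m))]
      exact mem_of_mem_nhds (hV i)
    · intro n
      rw [Function.update_of_ne (hmf n)]
      exact hy n
    · intro h
      have := congrFun h m
      simp at this
end
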